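/- arXiv:1508.04397 — 4 statements merged into one kernel-verified Lean document; each statement's English description precedes it below -/
import Mathlib

section
/- Assume condition (*). For any μ ∈ ℝ with μ ∉ S(V), there exists an index I = I(μ) such that for all v ∈ V \ {0} and all j > i ≥ I: if f_{i+1}(v) ≥ f_i(v) + μ, then f_{j+1}(v) > f_j(v) + μ. -/
open Filter Topology NormedSpace
open scoped LinearAlgebra.Projectivization

set_option linter.unusedSectionVars false

noncomputable section

namespace CSW

variable {E : Type*} [NormedAddCommGroup E] [InnerProductSpace ℂ E] [FiniteDimensional ℂ E]
variable {V : Type*} [NormedAddCommGroup V] [InnerProductSpace ℂ V] [FiniteDimensional ℂ V]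

/-- The exponential `e^T` of a bounded operator, as a unit (invertible element) of the algebra
of continuous linear endomorphisms. -/
def expUnit (T : E →L[ℂ] E) : (E →L[ℂ] E)ˣ where
  val := exp T
  inv := exp (-T)
  val_inv := by
    rw [← exp_add_of_commute_of_mem_ball (𝕂 := ℂ) (Commute.refl T).neg_right
      ((expSeries_radius_eq_top ℂ (E →L[ℂ] E)).symm ▸ edist_lt_top _ _)
      ((expSeries_radius_eq_top ℂ (E →L[ℂ] E)).symm ▸ edist_lt_top _ _), add_neg_cancel, exp_zero]
  inv_val := by
    rw [← exp_add_of_commute_of_mem_ball (𝕂 := ℂ) (Commute.refl T).neg_left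
      ((expSeries_radius_eq_top ℂ (E →L[ℂ] E)).symm ▸ edist_lt_top _ _)
      ((expSeries_radius_eq_top ℂ (E →L[ℂ] E)).symm ▸ edist_lt_top _ _), neg_add_cancel, exp_zero]

/-- `Bseq A i` is `B_i = A_i A_{i-1}⁻¹` (with the junk value `B_0 = 1`). -/
def Bseq (A : ℕ → (E →L[ℂ] E)ˣ) (i : ℕ) : (E →L[ℂ] E)ˣ := A i * (A (i - 1))⁻¹

/-- Condition (*): for any subsequence, after passing to a further subsequence, `B_{α+1}` and
`B_{α+2}` both converge (in operator norm) to `g e^Λ g⁻¹` for some unitary `g`. -/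
def CondStar (A : ℕ → (E →L[ℂ] E)ˣ) (Λ : E →L[ℂ] E) : Prop :=
  ∀ φ : ℕ → ℕ, StrictMono φ → ∃ ψ : ℕ → ℕ, StrictMono ψ ∧ ∃ g : (E →L[ℂ] E)ˣ,
    (g : E →L[ℂ] E) ∈ unitary (E →L[ℂ] E) ∧
    Tendsto (fun j => (Bseq A (φ (ψ j) + 1) : E →L[ℂ] E)) atTop
      (𝓝 ((g * expUnit Λ * g⁻¹ : (E →L[ℂ] E)ˣ) : E →L[ℂ] E)) ∧
    Tendsto (fun j => (Bseq A (φ (ψ j) + 2) : E →L[ℂ] E)) atTop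
      (𝓝 ((g * expUnit Λ * g⁻¹ : (E →L[ℂ] E)ˣ) : E →L[ℂ] E))

/-- Condition (*)' for a given gauge sequence `g`: `g 0 = 1`, each `g i` is unitary,
`B_i g_i e^{-Λ} g_i⁻¹ → Id` and `g_{i-1}⁻¹ g_i → Id`. -/
def CondStar' (A : ℕ → (E →L[ℂ] E)ˣ) (Λ : E →L[ℂ] E) (g : ℕ → (E →L[ℂ] E)ˣ) : Prop :=
  g 0 = 1 ∧ (∀ i, (g i : E →L[ℂ] E) ∈ unitary (E →L[ℂ] E)) ∧
  Tendsto (fun i => ((Bseq A i * g i * expUnit (-Λ) * (g i)⁻¹ : (E →L[ℂ] E)ˣ) : E →L[ℂ] E))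
    atTop (𝓝 1) ∧
  Tendsto (fun i => (((g (i - 1))⁻¹ * g i : (E →L[ℂ] E)ˣ) : E →L[ℂ] E)) atTop (𝓝 1)

/-- Membership in `G_Λ = {g ∈ G : g Λ g⁻¹ = Λ}`. -/
def InGΛ (Λ : E →L[ℂ] E) (h : (E →L[ℂ] E)ˣ) : Prop :=
  (h : E →L[ℂ] E) * Λ = Λ * (h : E →L[ℂ] E)

/-- Membership in `K_Λ = {g ∈ K : g Λ g⁻¹ = Λ}`. -/
def InKΛ (Λ : E →L[ℂ] E) (h : (E →L[ℂ] E)ˣ) : Prop :=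
  (h : E →L[ℂ] E) ∈ unitary (E →L[ℂ] E) ∧ InGΛ Λ h

/-- A (continuous, finite-dimensional) complex representation `ρ` of `G = GL(E)` on a Hermitian
vector space `V`, mapping unitary elements to unitary elements, together with a self-adjoint
operator `Λ_V` on `V` compatible with `Λ` via `ρ(e^{tΛ}) = e^{tΛ_V}`. -/
structure Rep (Λ : E →L[ℂ] E) (V : Type*) [NormedAddCommGroup V] [InnerProductSpace ℂ V]
    [FiniteDimensional ℂ V] where
  ρ : (E →L[ℂ] E)ˣ →* (V →L[ℂ] V)ˣ
  continuous_ρ : Continuous fun u : (E →L[ℂ] E)ˣ => ((ρ u : (V →L[ℂ] V)ˣ) : V →L[ℂ] V)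
  unitary_ρ : ∀ u : (E →L[ℂ] E)ˣ, (u : E →L[ℂ] E) ∈ unitary (E →L[ℂ] E) →
    ((ρ u : (V →L[ℂ] V)ˣ) : V →L[ℂ] V) ∈ unitary (V →L[ℂ] V)
  ΛV : V →L[ℂ] V
  selfAdjoint_ΛV : IsSelfAdjoint ΛV
  exp_eq : ∀ t : ℝ, ((ρ (expUnit ((t : ℂ) • Λ)) : (V →L[ℂ] V)ˣ) : V →L[ℂ] V)
      = exp ((t : ℂ) • ΛV)

variable {Λ : E →L[ℂ] E}

theorem unit_apply_ne_zero (u : (V →L[ℂ] V)ˣ) {v : V} (hv : v ≠ 0) :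
    (u : V →L[ℂ] V) v ≠ 0 := by
  intro h
  apply hv
  have h2 : (((u⁻¹ : (V →L[ℂ] V)ˣ) : V →L[ℂ] V) * (u : V →L[ℂ] V)) v = 0 := by
    rw [ContinuousLinearMap.mul_apply, h, map_zero]
  rwa [Units.inv_mul, ContinuousLinearMap.one_apply] at h2

theorem unit_apply_injective (u : (V →L[ℂ] V)ˣ) :
    Function.Injective ((u : V →L[ℂ] V) : V → V) := by
  intro a b hab
  have h2 := congrArg (fun x => ((u⁻¹ : (V →L[ℂ] V)ˣ) : V →L[ℂ] V) x) hab
  simpa [← ContinuousLinearMap.mul_apply, Units.inv_mul] using h2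

/-- `f_i(v) = log ‖ρ(A_i) v‖`. -/
def fseq (R : Rep Λ V) (A : ℕ → (E →L[ℂ] E)ˣ) (v : V) (i : ℕ) : ℝ :=
  Real.log ‖(R.ρ (A i) : V →L[ℂ] V) v‖

/-- The quotient topology on the projectivization of a topological vector space. -/
instance : TopologicalSpace (ℙ ℂ V) := instTopologicalSpaceQuotient

/-- The natural action of `GL(E)` on `ℙ(V)` through the representation `R`. -/
def pact (R : Rep Λ V) (u : (E →L[ℂ] E)ˣ) : ℙ ℂ V → ℙ ℂ V :=
  Projectivization.map (((R.ρ u : (V →L[ℂ] V)ˣ) : V →L[ℂ] V) : V →ₗ[ℂ] V)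
    (unit_apply_injective _)

/-- The limit set `Lim(v) ⊆ ℙ(V)`: the union of the `ρ(K_Λ)`-orbits of all subsequential limits
of `[ρ(g_i⁻¹ A_i) v]`. -/
def LimSet (R : Rep Λ V) (A g : ℕ → (E →L[ℂ] E)ˣ) {v : V} (hv : v ≠ 0) :
    Set (ℙ ℂ V) :=
  {y | ∃ (w : V) (hw : w ≠ 0) (k : (E →L[ℂ] E)ˣ), InKΛ Λ k ∧
    y = Projectivization.mk ℂ ((R.ρ k : V →L[ℂ] V) w) (unit_apply_ne_zero _ hw) ∧
    ∃ φ : ℕ → ℕ, StrictMono φ ∧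
      Tendsto (fun j => Projectivization.mk ℂ
          ((R.ρ ((g (φ j))⁻¹ * A (φ j)) : V →L[ℂ] V) v) (unit_apply_ne_zero _ hv))
        atTop (𝓝 (Projectivization.mk ℂ w hw))}

/-- The eigenspace `U` of `Λ` with (real) eigenvalue `c`. -/
def eigU (Λ : E →L[ℂ] E) (c : ℝ) : Submodule ℂ E :=
  Module.End.eigenspace (Λ : E →ₗ[ℂ] E) (c : ℂ)

/-- The weight `d(v) = lim_i i⁻¹ log ‖A_i v‖` for the standard representation of `GL(E)` on `E`
(a junk value if the limit does not exist). -/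
def dstd (A : ℕ → (E →L[ℂ] E)ˣ) (v : E) : ℝ :=
  limUnder atTop fun i : ℕ => Real.log ‖(A i : E →L[ℂ] E) v‖ / i

/-- `p_s = Σ_{k ≤ s} n_k` where `n_k = dim U_k`. -/
def psum (Λ : E →L[ℂ] E) {r : ℕ} (lam : Fin r → ℝ) (s : Fin r) : ℕ :=
  ∑ k ∈ Finset.univ.filter (fun k => k ≤ s), Module.finrank ℂ (eigU Λ (lam k))

/-- `q_s = Σ_{k ≥ s} n_k` where `n_k = dim U_k`. -/
def qsum (Λ : E →L[ℂ] E) {r : ℕ} (lam : Fin r → ℝ) (s : Fin r) : ℕ :=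
  ∑ k ∈ Finset.univ.filter (fun k => s ≤ k), Module.finrank ℂ (eigU Λ (lam k))

/-- A model for the `p`-th exterior power of `E`, with its induced Hermitian metric
(determined by `⟨x₁∧⋯∧x_p, y₁∧⋯∧y_p⟩ = det(⟨x_i, y_j⟩)`), the induced representation of `GL(E)`,
and the induced self-adjoint operator (the derivation extension of `Λ`, pinned down by
`Rep.exp_eq` and equivariance of `wedge`). -/
structure ExtPower (Λ : E →L[ℂ] E) (p : ℕ) where
  P : Type
  [normed : NormedAddCommGroup P]
  [ips : InnerProductSpace ℂ P]
  [fd : FiniteDimensional ℂ P]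
  R : Rep Λ P
  wedge : E [⋀^Fin p]→ₗ[ℂ] P
  wedge_map : ∀ (u : (E →L[ℂ] E)ˣ) (x : Fin p → E),
    ((R.ρ u : (P →L[ℂ] P)ˣ) : P →L[ℂ] P) (wedge x) = wedge fun j => (u : E →L[ℂ] E) (x j)
  wedge_inner : ∀ x y : Fin p → E,
    (inner ℂ (wedge x) (wedge y) : ℂ) = (Matrix.of fun i j : Fin p => (inner ℂ (x i) (y j) : ℂ)).det
  wedge_span : Submodule.span ℂ (Set.range wedge) = ⊤

attribute [instance] ExtPower.normed ExtPower.ips ExtPower.fd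

/-- A bundle of the choices made in Section 2 of the paper: a gauge sequence `g` as in (*)',
the filtration `V_s` (with `V_{r+1} = 0`), complements `W_s` with `V_s = W_s ⊕ V_{s+1}` and
`Lim(W_s) = {[⋀^{n_s} U_s]}`, and identifications `C_i → Id` carrying `g_i⁻¹ A_i · W_s`
onto `U_s`. -/
structure Choices (A : ℕ → (E →L[ℂ] E)ˣ) (Λ : E →L[ℂ] E) (r : ℕ) (lam : Fin r → ℝ)
    (EP : ∀ p : ℕ, ExtPower Λ p) where
  g : ℕ → (E →L[ℂ] E)ˣ
  hg : CondStar' A Λ g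
  Vsub : Fin (r + 1) → Submodule ℂ E
  hVsub : ∀ s : Fin r, (Vsub s.castSucc : Set E) = {v : E | v = 0 ∨ dstd A v ≤ lam s}
  hVlast : Vsub (Fin.last r) = ⊥
  W : Fin r → Submodule ℂ E
  hW_sup : ∀ s : Fin r, W s ⊔ Vsub s.succ = Vsub s.castSucc
  hW_inf : ∀ s : Fin r, W s ⊓ Vsub s.succ = ⊥
  hW_lim : ∀ s : Fin r, ∀ b : Fin (Module.finrank ℂ (eigU Λ (lam s))) → E,
    LinearIndependent ℂ b → Submodule.span ℂ (Set.range b) = W s →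
    ∀ c : Fin (Module.finrank ℂ (eigU Λ (lam s))) → E,
    LinearIndependent ℂ c → Submodule.span ℂ (Set.range c) = eigU Λ (lam s) →
    ∃ (hb : (EP (Module.finrank ℂ (eigU Λ (lam s)))).wedge b ≠ 0)
      (hc : (EP (Module.finrank ℂ (eigU Λ (lam s)))).wedge c ≠ 0),
      LimSet (EP (Module.finrank ℂ (eigU Λ (lam s)))).R A g hb
        = {Projectivization.mk ℂ ((EP (Module.finrank ℂ (eigU Λ (lam s)))).wedge c) hc}
  C : ℕ → (E →L[ℂ] E)ˣ
  hC_lim : Tendsto (fun i => (C i : E →L[ℂ] E)) atTop (𝓝 1)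
  hC_map : ∀ (s : Fin r) (i : ℕ),
    Submodule.map ((((C i * (g i)⁻¹ * A i : (E →L[ℂ] E)ˣ) : E →L[ℂ] E) : E →ₗ[ℂ] E)) (W s)
      = eigU Λ (lam s)

/-- A model for the symmetric algebra `Sym(E*) = ⊕_k Sym^k(E*)` on the dual of `E`:
each graded piece is a Hermitian space carrying a compatible representation of `GL(E)`
(induced by the dual of the standard representation), `gen` identifies the degree-one piece
with `E*` equivariantly, and the product is bilinear, equivariant, has no zero divisors, and
together with the generators spans each graded piece. -/
structure SymModel (Λ : E →L[ℂ] E) where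
  P : ℕ → Type
  [normed : ∀ k, NormedAddCommGroup (P k)]
  [ips : ∀ k, InnerProductSpace ℂ (P k)]
  [fd : ∀ k, FiniteDimensional ℂ (P k)]
  R : ∀ k, Rep Λ (P k)
  mul : ∀ {k l : ℕ}, P k →ₗ[ℂ] P l →ₗ[ℂ] P (k + l)
  mul_equivariant : ∀ {k l : ℕ} (u : (E →L[ℂ] E)ˣ) (x : P k) (y : P l),
    (((R (k + l)).ρ u : (P (k + l) →L[ℂ] P (k + l))ˣ) : P (k + l) →L[ℂ] P (k + l)) (mul x y)
      = mul ((((R k).ρ u : (P k →L[ℂ] P k)ˣ) : P k →L[ℂ] P k) x)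
            ((((R l).ρ u : (P l →L[ℂ] P l)ˣ) : P l →L[ℂ] P l) y)
  mul_ne_zero : ∀ {k l : ℕ} {x : P k} {y : P l}, x ≠ 0 → y ≠ 0 → mul x y ≠ 0
  gen : (E →L[ℂ] ℂ) ≃ₗ[ℂ] P 1
  gen_equivariant : ∀ (u : (E →L[ℂ] E)ˣ) (l : E →L[ℂ] ℂ),
    (((R 1).ρ u : (P 1 →L[ℂ] P 1)ˣ) : P 1 →L[ℂ] P 1) (gen l)
      = gen (l.comp (((u⁻¹ : (E →L[ℂ] E)ˣ) : E →L[ℂ] E)))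
  span_gen_mul : ∀ k : ℕ, Submodule.span ℂ
      {z : P (k + 1) | ∃ (x : P k) (l : E →L[ℂ] ℂ), z = mul x (gen l)} = ⊤

attribute [instance] SymModel.normed SymModel.ips SymModel.fd

/-! Put `x = ρ(A_i) v`, so that `f_{i+1}(v) - f_i(v) = log (‖ρ(B_{i+1}) x‖ / ‖x‖)`. For the
self-adjoint operator `M = e^{Λ_V}`, Cauchy–Schwarz gives `‖M y‖² ≤ ‖M² y‖ ‖y‖`; hence if `M`
stretches `y` by at least `e^μ`, it stretches `M y` by at least `e^μ` too, and equality forces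
`M² y = e^{2μ} y`, i.e. `μ ∈ S(V)`. So for `μ ∉ S(V)` every limit `ρ(g) e^{Λ_V} ρ(g)⁻¹` provided by
(*) turns "growth by `≥ e^μ`" into "growth by `> e^μ`" at the next step. By compactness of the unit
sphere this persists for the pairs `(ρ(B_{i+1}), ρ(B_{i+2}))` once `i` is large, and induction on
`j` gives the claim. -/

open scoped InnerProductSpace

section GrowthStep

variable {𝕜 H : Type*} [RCLike 𝕜] [NormedAddCommGroup H]

/-- With `S = ρ(B_{i+1})`, `T = ρ(B_{i+2})` and `c = e^μ`, this is the implication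
`f_{i+1} ≥ f_i + μ → f_{i+2} > f_{i+1} + μ`. -/
def GrowthStep [NormedSpace 𝕜 H] (c : ℝ) (S T : H →L[𝕜] H) : Prop :=
  ∀ w : H, w ≠ 0 → c * ‖w‖ ≤ ‖S w‖ → c * ‖S w‖ < ‖T (S w)‖

theorem exists_norm_eq_one_of_not_growthStep [NormedSpace 𝕜 H] {c : ℝ} {S T : H →L[𝕜] H}
    (h : ¬ GrowthStep c S T) :
    ∃ w : H, ‖w‖ = 1 ∧ c ≤ ‖S w‖ ∧ ‖T (S w)‖ ≤ c * ‖S w‖ := by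
  simp only [GrowthStep, not_forall, not_lt] at h
  obtain ⟨w, hw, hSw, hTSw⟩ := h
  have hpos : 0 < ‖w‖ := norm_pos_iff.2 hw
  have hscale : ∀ x : H, ‖((‖w‖⁻¹ : ℝ) : 𝕜) • x‖ = ‖w‖⁻¹ * ‖x‖ := fun x => by
    rw [norm_smul, RCLike.norm_ofReal, abs_of_pos (inv_pos.2 hpos)]
  refine ⟨((‖w‖⁻¹ : ℝ) : 𝕜) • w, ?_, ?_, ?_⟩
  · rw [hscale, inv_mul_cancel₀ hpos.ne']
  · rw [map_smul, hscale, le_inv_mul_iff₀ hpos, mul_comm]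
    exact hSw
  · rw [map_smul, map_smul, hscale, hscale, mul_left_comm]
    exact mul_le_mul_of_nonneg_left hTSw (inv_nonneg.2 hpos.le)

/-- If infinitely many pairs had a stalling unit vector, a limit of those vectors would stall for
a limit operator `L`. -/
theorem eventually_growthStep [NormedSpace 𝕜 H] [ProperSpace H] {c : ℝ}
    {S T : ℕ → H →L[𝕜] H}
    (h : ∀ φ : ℕ → ℕ, StrictMono φ → ∃ ψ : ℕ → ℕ, StrictMono ψ ∧ ∃ L : H →L[𝕜] H,
      GrowthStep c L L ∧ Tendsto (fun j => S (φ (ψ j))) atTop (𝓝 L) ∧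
        Tendsto (fun j => T (φ (ψ j))) atTop (𝓝 L)) :
    ∀ᶠ n in atTop, GrowthStep c (S n) (T n) := by
  by_contra hne
  obtain ⟨φ, hφ, hbad⟩ := extraction_of_frequently_atTop (not_eventually.1 hne)
  obtain ⟨ψ, hψ, L, hL, hS, hT⟩ := h φ hφ
  choose w hw1 hSw hTSw using fun n => exists_norm_eq_one_of_not_growthStep (hbad n)
  obtain ⟨y, hy, θ, hθ, hwy⟩ := (isCompact_sphere (0 : H) 1).tendsto_subseq
    (x := fun j => w (ψ j)) fun j => by simpa using hw1 (ψ j)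
  have hy1 : ‖y‖ = 1 := by simpa using hy
  have happly : Continuous fun p : (H →L[𝕜] H) × H => p.1 p.2 :=
    isBoundedBilinearMap_apply.continuous
  have hSlim : Tendsto (fun n => S (φ (ψ (θ n))) (w (ψ (θ n)))) atTop (𝓝 (L y)) :=
    (happly.tendsto (L, y)).comp ((hS.comp hθ.tendsto_atTop).prodMk_nhds hwy)
  have hTlim : Tendsto (fun n => T (φ (ψ (θ n))) (S (φ (ψ (θ n))) (w (ψ (θ n))))) atTop
      (𝓝 (L (L y))) :=
    (happly.tendsto (L, L y)).comp ((hT.comp hθ.tendsto_atTop).prodMk_nhds hSlim)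
  have hgrow : c * ‖y‖ ≤ ‖L y‖ := by
    rw [hy1, mul_one]
    exact ge_of_tendsto' hSlim.norm fun n => hSw (ψ (θ n))
  have hstall : ‖L (L y)‖ ≤ c * ‖L y‖ :=
    le_of_tendsto_of_tendsto' hTlim.norm (tendsto_const_nhds.mul hSlim.norm)
      fun n => hTSw (ψ (θ n))
  exact (hstall.trans_lt (hL y (norm_ne_zero_iff.1 (by rw [hy1]; exact one_ne_zero)) hgrow)).false

variable [InnerProductSpace 𝕜 H] [CompleteSpace H]

theorem GrowthStep.conj_unitary {c : ℝ} {S T U : H →L[𝕜] H} (h : GrowthStep c S T)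
    (hU : U ∈ unitary (H →L[𝕜] H)) : GrowthStep c (U * S * star U) (U * T * star U) := by
  intro w hw hgrow
  have hstarU : ∀ x, star U (U x) = x := fun x => by
    rw [← mul_apply_eq_comp, Unitary.star_mul_self_of_mem hU, one_apply_eq_self]
  have hnorm := ContinuousLinearMap.norm_map_of_mem_unitary hU
  have hnorm' := ContinuousLinearMap.norm_map_of_mem_unitary (Unitary.star_mem hU)
  simp only [mul_apply_eq_comp, hstarU, hnorm] at hgrow ⊢
  rw [← hnorm' w] at hgrow
  exact h _ (norm_ne_zero_iff.1 (by rw [hnorm']; exact norm_ne_zero_iff.2 hw)) hgrow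

theorem _root_.IsSelfAdjoint.inner_apply_apply {M : H →L[𝕜] H} (hM : IsSelfAdjoint M) (w : H) :
    ⟪M (M w), w⟫_𝕜 = ⟪M w, M w⟫_𝕜 :=
  hM.isSymmetric (M w) w

theorem _root_.IsSelfAdjoint.norm_apply_sq_le {M : H →L[𝕜] H} (hM : IsSelfAdjoint M) (w : H) :
    ‖M w‖ ^ 2 ≤ ‖M (M w)‖ * ‖w‖ := by
  calc ‖M w‖ ^ 2 = RCLike.re ⟪M (M w), w⟫_𝕜 := by
        rw [hM.inner_apply_apply]; exact (inner_self_eq_norm_sq _).symm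
    _ ≤ ‖⟪M (M w), w⟫_𝕜‖ := RCLike.re_le_norm _
    _ ≤ ‖M (M w)‖ * ‖w‖ := norm_inner_le_norm _ _

theorem _root_.IsSelfAdjoint.smul_apply_apply_eq {M : H →L[𝕜] H} (hM : IsSelfAdjoint M) {w : H}
    (h : ‖M (M w)‖ * ‖w‖ ≤ ‖M w‖ ^ 2) :
    (‖w‖ : 𝕜) • M (M w) = (‖M (M w)‖ : 𝕜) • w := by
  refine inner_eq_norm_mul_iff.1 ?_
  rw [hM.inner_apply_apply, inner_self_eq_norm_sq_to_K]
  exact_mod_cast le_antisymm (hM.norm_apply_sq_le w) h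

theorem mem_spectrum_of_apply_eq_smul {T : H →L[𝕜] H} {w : H} {a : 𝕜} (hw : w ≠ 0)
    (h : T w = a • w) : a ∈ spectrum 𝕜 T := by
  rw [ContinuousLinearMap.spectrum_eq]
  exact (Module.End.hasEigenvalue_of_hasEigenvector
    ⟨Module.End.mem_eigenspace_iff.2 h, hw⟩).mem_spectrum

end GrowthStep

theorem _root_.IsSelfAdjoint.mem_spectrum_of_exp_mul_exp {A : Type*} [NormedRing A] [StarRing A]
    [NormedAlgebra ℝ A] [ContinuousFunctionalCalculus ℝ A IsSelfAdjoint] {a : A}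
    (ha : IsSelfAdjoint a) {μ : ℝ} (h : Real.exp μ * Real.exp μ ∈ spectrum ℝ (exp a * exp a)) :
    μ ∈ spectrum ℝ a := by
  rw [← CFC.real_exp_eq_normedSpace_exp ha, ← cfc_mul Real.exp Real.exp a,
    cfc_map_spectrum _ a] at h
  obtain ⟨ν, hν, hνμ⟩ := h
  dsimp only at hνμ
  rw [← Real.exp_add, ← Real.exp_add, Real.exp_eq_exp] at hνμ
  rwa [show μ = ν by linarith]

theorem _root_.IsSelfAdjoint.growthStep_exp {H : Type*} [NormedAddCommGroup H]
    [InnerProductSpace ℂ H] [CompleteSpace H] {T : H →L[ℂ] H} (hT : IsSelfAdjoint T) {μ : ℝ}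
    (hμ : (μ : ℂ) ∉ spectrum ℂ T) : GrowthStep (Real.exp μ) (exp T) (exp T) := by
  intro w hw hgrow
  by_contra! hstall
  set M := exp T
  have hM : IsSelfAdjoint M := hT.exp
  have hwpos : 0 < ‖w‖ := norm_pos_iff.2 hw
  have hcs := hM.norm_apply_sq_le w
  have hMwpos : 0 < ‖M w‖ := (mul_pos (Real.exp_pos μ) hwpos).trans_le hgrow
  have hMw : ‖M w‖ = Real.exp μ * ‖w‖ := by
    have : ‖M w‖ * ‖M w‖ ≤ Real.exp μ * ‖w‖ * ‖M w‖ := by nlinarith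
    exact le_antisymm (le_of_mul_le_mul_right this hMwpos) hgrow
  have hMMw : ‖M (M w)‖ = Real.exp μ * Real.exp μ * ‖w‖ := by
    rw [hMw] at hcs hstall
    nlinarith [Real.exp_pos μ]
  have heig : (M * M) w = ((Real.exp μ * Real.exp μ : ℝ) : ℂ) • w := by
    have h := hM.smul_apply_apply_eq (w := w) (le_of_eq (by rw [hMMw, hMw]; ring))
    rw [hMMw, mul_comm _ ‖w‖, RCLike.ofReal_mul, mul_smul] at h
    exact smul_right_injective H (by simpa using hwpos.ne') h
  refine hμ ((spectrum.algebraMap_mem_iff ℂ).2 (hT.mem_spectrum_of_exp_mul_exp ?_))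
  exact (spectrum.algebraMap_mem_iff ℂ).1 (mem_spectrum_of_apply_eq_smul hw heig)

theorem log_add_le_log_iff {a b μ : ℝ} (ha : 0 < a) (hb : 0 < b) :
    Real.log a + μ ≤ Real.log b ↔ Real.exp μ * a ≤ b := by
  rw [Real.le_log_iff_exp_le hb, Real.exp_add, Real.exp_log ha, mul_comm]

theorem log_add_lt_log_iff {a b μ : ℝ} (ha : 0 < a) (hb : 0 < b) :
    Real.log a + μ < Real.log b ↔ Real.exp μ * a < b := by
  rw [Real.lt_log_iff_exp_lt hb, Real.exp_add, Real.exp_log ha, mul_comm]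

theorem Bseq_succ_mul (A : ℕ → (E →L[ℂ] E)ˣ) (k : ℕ) : Bseq A (k + 1) * A k = A (k + 1) := by
  simp [Bseq]

namespace Rep

variable (R : Rep Λ V)

theorem ρ_succ_apply (A : ℕ → (E →L[ℂ] E)ˣ) (k : ℕ) (v : V) :
    (R.ρ (A (k + 1)) : V →L[ℂ] V) v =
      (R.ρ (Bseq A (k + 1)) : V →L[ℂ] V) ((R.ρ (A k) : V →L[ℂ] V) v) := by
  rw [← Bseq_succ_mul A k, map_mul, Units.val_mul, mul_apply_eq_comp]

theorem coe_ρ_expUnit : (R.ρ (expUnit Λ) : V →L[ℂ] V) = exp R.ΛV := by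
  simpa using R.exp_eq 1

theorem tendsto_ρ {u : ℕ → (E →L[ℂ] E)ˣ} {u₀ : (E →L[ℂ] E)ˣ}
    (h : Tendsto (fun j => (u j : E →L[ℂ] E)) atTop (𝓝 (u₀ : E →L[ℂ] E))) :
    Tendsto (fun j => (R.ρ (u j) : V →L[ℂ] V)) atTop (𝓝 (R.ρ u₀ : V →L[ℂ] V)) :=
  (R.continuous_ρ.tendsto u₀).comp (Units.isOpenEmbedding_val.isInducing.tendsto_nhds_iff.2 h)

theorem growthStep_conj_expUnit {g : (E →L[ℂ] E)ˣ} (hg : (g : E →L[ℂ] E) ∈ unitary (E →L[ℂ] E))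
    {μ : ℝ} (hμ : (μ : ℂ) ∉ spectrum ℂ R.ΛV) :
    GrowthStep (Real.exp μ) (R.ρ (g * expUnit Λ * g⁻¹) : V →L[ℂ] V)
      (R.ρ (g * expUnit Λ * g⁻¹) : V →L[ℂ] V) := by
  have hU := R.unitary_ρ g hg
  have hinv : (((R.ρ g)⁻¹ : (V →L[ℂ] V)ˣ) : V →L[ℂ] V) = star (R.ρ g : V →L[ℂ] V) :=
    Units.inv_eq_of_mul_eq_one_right (Unitary.mul_star_self_of_mem hU)
  rw [map_mul, map_mul, map_inv, Units.val_mul, Units.val_mul, coe_ρ_expUnit, hinv]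
  exact (R.selfAdjoint_ΛV.growthStep_exp hμ).conj_unitary hU

theorem eventually_growthStep {A : ℕ → (E →L[ℂ] E)ˣ} (hstar : CondStar A Λ) {μ : ℝ}
    (hμ : (μ : ℂ) ∉ spectrum ℂ R.ΛV) :
    ∀ᶠ k in atTop, GrowthStep (Real.exp μ) (R.ρ (Bseq A (k + 1)) : V →L[ℂ] V)
      (R.ρ (Bseq A (k + 2)) : V →L[ℂ] V) :=
  CSW.eventually_growthStep fun φ hφ => by
    obtain ⟨ψ, hψ, g, hg, h₁, h₂⟩ := hstar φ hφ
    exact ⟨ψ, hψ, _, R.growthStep_conj_expUnit hg hμ, R.tendsto_ρ h₁, R.tendsto_ρ h₂⟩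

theorem fseq_step {A : ℕ → (E →L[ℂ] E)ˣ} {v : V} (hv : v ≠ 0) {μ : ℝ} {k : ℕ}
    (hstep : GrowthStep (Real.exp μ) (R.ρ (Bseq A (k + 1)) : V →L[ℂ] V)
      (R.ρ (Bseq A (k + 2)) : V →L[ℂ] V))
    (h : fseq R A v k + μ ≤ fseq R A v (k + 1)) :
    fseq R A v (k + 1) + μ < fseq R A v (k + 2) := by
  have hpos : ∀ n, 0 < ‖(R.ρ (A n) : V →L[ℂ] V) v‖ := fun n =>
    norm_pos_iff.2 (unit_apply_ne_zero _ hv)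
  simp only [fseq] at h ⊢
  rw [log_add_le_log_iff (hpos k) (hpos (k + 1))] at h
  rw [log_add_lt_log_iff (hpos (k + 1)) (hpos (k + 2))]
  rw [R.ρ_succ_apply A k] at h ⊢
  rw [R.ρ_succ_apply A (k + 1), R.ρ_succ_apply A k]
  exact hstep _ (unit_apply_ne_zero _ hv) h

end Rep

theorem mono_threshold_general (Λ : E →L[ℂ] E)
    (A : ℕ → (E →L[ℂ] E)ˣ) (hstar : CondStar A Λ)
    (R : Rep Λ V) (μ : ℝ) (hμ : (μ : ℂ) ∉ spectrum ℂ R.ΛV) :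
    ∃ I : ℕ, ∀ v : V, v ≠ 0 → ∀ i j : ℕ, I ≤ i → i < j →
      fseq R A v i + μ ≤ fseq R A v (i + 1) →
      fseq R A v j + μ < fseq R A v (j + 1) := by
  obtain ⟨I, hI⟩ := eventually_atTop.1 (R.eventually_growthStep hstar hμ)
  refine ⟨I, fun v hv i j hIi hij hbase => ?_⟩
  induction j, hij using Nat.le_induction with
  | base => exact R.fseq_step hv (hI i hIi) hbase
  | succ k hk ih => exact R.fseq_step hv (hI k (by omega)) ih.le

/-- Lemma 2.1. Assume condition (*). For any `μ ∉ S(V)` there is `I = I(μ)`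
such that for all `v ≠ 0` and `j > i ≥ I`: if `f_{i+1}(v) ≥ f_i(v) + μ` then
`f_{j+1}(v) > f_j(v) + μ`. -/
theorem mono_threshold (Λ : E →L[ℂ] E) (hΛ : IsSelfAdjoint Λ)
    (A : ℕ → (E →L[ℂ] E)ˣ) (hA0 : A 0 = 1) (hstar : CondStar A Λ)
    (R : Rep Λ V) (μ : ℝ) (hμ : (μ : ℂ) ∉ spectrum ℂ R.ΛV) :
    ∃ I : ℕ, ∀ v : V, v ≠ 0 → ∀ i j : ℕ, I ≤ i → i < j →
      fseq R A v i + μ ≤ fseq R A v (i + 1) →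
      fseq R A v j + μ < fseq R A v (j + 1) :=
  mono_threshold_general Λ A hstar R μ hμ

end CSW
end
end

section
/- Assume condition (*). For v ∈ V \ {0}, the ρ(G_Λ)-orbit of the point [v̄] = lim_{t→∞} [ρ(C_0 λ(t)) v] is uniquely determined by the sequence (A_i) and the point [v]: it is independent of the choices of the gauge sequence (g_i), of the complementary subspaces W_s, and of the identifications C_i, C_0. -/
/-!
Through `C_0` and `C_0'`, both choices carry the weight filtration `V_s`, which depends only on
`(A_i)`, onto the flag `F_s = ⊕_{k ≥ s} U_k`. Hence `u = C_0' C_0⁻¹` preserves this flag, i.e. it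
is block lower-triangular for the eigenspace decomposition of `Λ` ordered by decreasing
eigenvalue, and `e^{tΛ} u e^{-tΛ}` converges to its block-diagonal part `h`, an element of `G_Λ`.
Since `ρ(e^{tΛ} C_0') v = ρ(e^{tΛ} u e^{-tΛ}) ρ(e^{tΛ} C_0) v`, passing to the limit in `ℙ(V)`
gives `[v̄'] = ρ(h) [v̄]`.
-/

open Filter Topology NormedSpace
open scoped LinearAlgebra.Projectivization

set_option linter.unusedSectionVars false

noncomputable section

namespace CSW

variable {E : Type*} [NormedAddCommGroup E] [InnerProductSpace ℂ E] [FiniteDimensional ℂ E]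
variable {V : Type*} [NormedAddCommGroup V] [InnerProductSpace ℂ V] [FiniteDimensional ℂ V]

variable {Λ : E →L[ℂ] E}

theorem exp_apply_of_apply_eq_smul {𝕂 F : Type*} [RCLike 𝕂] [NormedAddCommGroup F]
    [NormedSpace 𝕂 F] [CompleteSpace F] {B : F →L[𝕂] F} {μ : 𝕂} {x : F} (hx : B x = μ • x) :
    exp B x = exp μ • x := by
  have hpow (n : ℕ) : (B ^ n) x = μ ^ n • x := by
    induction n with
    | zero => simp
    | succ n ih =>
      rw [pow_succ, mul_apply_eq_comp, hx, map_smul, ih, smul_smul, ← pow_succ']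
  rw [exp_eq_tsum 𝕂, exp_eq_tsum 𝕂, ← ContinuousLinearMap.apply_apply x,
    (ContinuousLinearMap.apply 𝕂 F x).map_tsum (expSeries_summable' B),
    ← (expSeries_summable' μ).tsum_smul_const]
  simp only [ContinuousLinearMap.apply_apply, smul_apply, hpow, smul_smul, smul_eq_mul]

theorem exists_unit_tendsto_of_tendsto_val_inv {ι M : Type*} [Monoid M] [TopologicalSpace M]
    [ContinuousMul M] [T2Space M] {l : Filter ι} [l.NeBot] {u : ι → Mˣ} {a b : M}
    (ha : Tendsto (fun i => (u i : M)) l (𝓝 a))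
    (hb : Tendsto (fun i => (((u i)⁻¹ : Mˣ) : M)) l (𝓝 b)) :
    ∃ w : Mˣ, (w : M) = a ∧ Tendsto u l (𝓝 w) := by
  have hab : a * b = 1 :=
    tendsto_nhds_unique ((ha.mul hb).congr fun i => Units.mul_inv (u i)) tendsto_const_nhds
  have hba : b * a = 1 :=
    tendsto_nhds_unique ((hb.mul ha).congr fun i => Units.inv_mul (u i)) tendsto_const_nhds
  refine ⟨⟨a, b, hab, hba⟩, rfl, ?_⟩
  rw [Units.isInducing_embedProduct.tendsto_nhds_iff]
  exact ha.prodMk_nhds ((MulOpposite.continuous_op.tendsto b).comp hb)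

section LineProjection

variable {𝕜 F : Type*} [RCLike 𝕜] [NormedAddCommGroup F] [InnerProductSpace 𝕜 F]

theorem starProjection_span_singleton_eq (v : F) :
    (𝕜 ∙ v).starProjection = ((‖v‖ : 𝕜) ^ 2)⁻¹ • (innerSL 𝕜 v).smulRight v := by
  ext w
  simp [Submodule.starProjection_singleton, div_eq_inv_mul, smul_smul]

theorem continuousAt_starProjection_span_singleton {z : F} (hz : z ≠ 0) :
    ContinuousAt (fun v : F => (𝕜 ∙ v).starProjection) z := by
  simp only [starProjection_span_singleton_eq]
  have hnorm : ContinuousAt (fun v : F => ((‖v‖ : 𝕜) ^ 2)⁻¹) z :=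
    ((RCLike.continuous_ofReal.comp continuous_norm).pow 2).continuousAt.inv₀ (by simpa)
  have hrankOne : Continuous fun v : F => (innerSL 𝕜 v).smulRight v :=
    isBoundedBilinearMap_smulRight.continuous.comp ((innerSL 𝕜).continuous.prodMk continuous_id)
  exact hnorm.smul hrankOne.continuousAt

end LineProjection

/-- Limits in `ℙ(V)` are compared through this continuous injection into `End(V)`. -/
def lineProj (p : ℙ ℂ V) : V →L[ℂ] V := p.submodule.starProjection

theorem lineProj_mk {w : V} (hw : w ≠ 0) :
    lineProj (Projectivization.mk ℂ w hw) = (ℂ ∙ w).starProjection :=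
  rfl

theorem lineProj_injective : Function.Injective (lineProj (V := V)) := by
  intro p q hpq
  apply Projectivization.submodule_injective
  rw [← Submodule.range_starProjection p.submodule, ← Submodule.range_starProjection q.submodule]
  exact congrArg LinearMap.range (congrArg ContinuousLinearMap.toLinearMap hpq)

theorem continuous_lineProj : Continuous (lineProj (V := V)) := by
  refine isQuotientMap_quotient_mk'.continuous_iff.mpr ?_
  refine continuous_iff_continuousAt.mpr fun w => ?_
  exact (continuousAt_starProjection_span_singleton w.2).comp continuous_subtype_val.continuousAt

theorem mk_eq_mk_apply_of_tendsto {ι : Type*} {l : Filter ι} [l.NeBot] {w : ι → V}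
    {S : ι → V →L[ℂ] V} {S₀ : V →L[ℂ] V} {x y : V} (hw : ∀ i, w i ≠ 0)
    (hSw : ∀ i, S i (w i) ≠ 0) (hx : x ≠ 0) (hy : y ≠ 0) (hS₀x : S₀ x ≠ 0)
    (hS : Tendsto S l (𝓝 S₀))
    (hwx : Tendsto (fun i => Projectivization.mk ℂ (w i) (hw i)) l
      (𝓝 (Projectivization.mk ℂ x hx)))
    (hSwy : Tendsto (fun i => Projectivization.mk ℂ (S i (w i)) (hSw i)) l
      (𝓝 (Projectivization.mk ℂ y hy))) :
    Projectivization.mk ℂ y hy = Projectivization.mk ℂ (S₀ x) hS₀x := by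
  have hPw : Tendsto (fun i => (ℂ ∙ w i).starProjection) l (𝓝 (ℂ ∙ x).starProjection) := by
    simpa only [Function.comp_def, lineProj_mk] using (continuous_lineProj.tendsto _).comp hwx
  have hPwx : Tendsto (fun i => (ℂ ∙ w i).starProjection x) l (𝓝 x) := by
    have := ((ContinuousLinearMap.apply ℂ V x).continuous.tendsto _).comp hPw
    rwa [Function.comp_def, ContinuousLinearMap.apply_apply,
      Submodule.starProjection_eq_self_iff.mpr (Submodule.mem_span_singleton_self x)] at this
  have hSPwx : Tendsto (fun i => S i ((ℂ ∙ w i).starProjection x)) l (𝓝 (S₀ x)) :=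
    (isBoundedBilinearMap_apply.continuous.tendsto _).comp (hS.prodMk_nhds hPwx)
  -- the projection of `x` lies on the line of `w i`, so `S i` maps it onto the line of `S i (w i)`
  have hline : ∀ᶠ i in l, (ℂ ∙ S i ((ℂ ∙ w i).starProjection x)).starProjection
      = (ℂ ∙ S i (w i)).starProjection := by
    filter_upwards [hSPwx.eventually_ne hS₀x] with i hi
    obtain ⟨c, hc⟩ := Submodule.mem_span_singleton.mp
      (Submodule.starProjection_apply_mem (ℂ ∙ w i) x)
    have hc0 : c ≠ 0 := by rintro rfl; simp [← hc] at hi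
    simp_rw [← hc, map_smul, Submodule.span_singleton_smul_eq hc0.isUnit]
  have hPy : Tendsto (fun i => (ℂ ∙ S i (w i)).starProjection) l (𝓝 (ℂ ∙ y).starProjection) := by
    simpa only [Function.comp_def, lineProj_mk] using (continuous_lineProj.tendsto _).comp hSwy
  have hPS₀x : Tendsto (fun i => (ℂ ∙ S i (w i)).starProjection) l
      (𝓝 (ℂ ∙ S₀ x).starProjection) :=
    ((continuousAt_starProjection_span_singleton hS₀x).tendsto.comp hSPwx).congr' hline
  apply lineProj_injective
  rw [lineProj_mk, lineProj_mk]
  exact tendsto_nhds_unique hPy hPS₀x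

section Spectral

variable {Λ : E →L[ℂ] E}

theorem mem_eigU_iff {c : ℝ} {x : E} : x ∈ eigU Λ c ↔ Λ x = (c : ℂ) • x :=
  Module.End.mem_eigenspace_iff

theorem mul_starProjection_eigU (c : ℝ) :
    Λ * (eigU Λ c).starProjection = (c : ℂ) • (eigU Λ c).starProjection := by
  ext x
  exact mem_eigU_iff.mp (Submodule.starProjection_apply_mem _ x)

theorem starProjection_eigU_mul (hΛ : IsSelfAdjoint Λ) (c : ℝ) :
    (eigU Λ c).starProjection * Λ = (c : ℂ) • (eigU Λ c).starProjection := by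
  have h := congrArg star (mul_starProjection_eigU (Λ := Λ) c)
  rwa [star_mul, star_smul, hΛ.star_eq, (isSelfAdjoint_starProjection _).star_eq,
    Complex.star_def, Complex.conj_ofReal] at h

theorem eigU_le_orthogonal (hΛ : IsSelfAdjoint Λ) {c d : ℝ} (hcd : c ≠ d) :
    eigU Λ d ≤ (eigU Λ c)ᗮ := by
  intro x hx
  rw [Submodule.mem_orthogonal]
  intro u hu
  simpa using hΛ.isSymmetric.orthogonalFamily_eigenspaces (by exact_mod_cast hcd) ⟨u, hu⟩ ⟨x, hx⟩

variable {r : ℕ} {lam : Fin r → ℝ}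

theorem ext_of_eigU (hUtop : (⨆ s, eigU Λ (lam s)) = ⊤) {S T : E →L[ℂ] E}
    (h : ∀ a, ∀ x ∈ eigU Λ (lam a), S x = T x) : S = T := by
  refine ContinuousLinearMap.coe_injective (LinearMap.ext_on (s := ⋃ a, (eigU Λ (lam a) : Set E))
    (by rw [← Submodule.iSup_eq_span, hUtop]) ?_)
  intro x hx
  obtain ⟨a, hxa⟩ := Set.mem_iUnion.mp hx
  exact h a x hxa

theorem exp_smul_apply_of_mem_eigU (t : ℝ) {c : ℝ} {x : E} (hx : x ∈ eigU Λ c) :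
    exp ((t : ℂ) • Λ) x = Real.exp (t * c) • x := by
  have htΛx : ((t : ℂ) • Λ) x = ((t : ℂ) * c) • x := by
    rw [smul_apply, mem_eigU_iff.mp hx, smul_smul]
  rw [exp_apply_of_apply_eq_smul htΛx, ← Complex.exp_eq_exp_ℂ, ← Complex.ofReal_mul,
    ← Complex.ofReal_exp, Complex.coe_smul]

theorem exp_smul_eq_sum (hΛ : IsSelfAdjoint Λ) (hinj : Function.Injective lam)
    (hUtop : (⨆ s, eigU Λ (lam s)) = ⊤) (t : ℝ) :
    exp ((t : ℂ) • Λ) = ∑ a, Real.exp (t * lam a) • (eigU Λ (lam a)).starProjection := by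
  refine ext_of_eigU hUtop fun a x hx => ?_
  rw [exp_smul_apply_of_mem_eigU t hx, sum_apply, Finset.sum_eq_single a]
  · rw [smul_apply, Submodule.starProjection_eq_self_iff.mpr hx]
  · intro b _ hb
    rw [smul_apply,
      (Submodule.starProjection_apply_eq_zero_iff _).mpr
        (eigU_le_orthogonal hΛ (fun h => hb (hinj h)) hx), smul_zero]
  · exact fun ha => absurd (Finset.mem_univ a) ha

def blockDiag (Λ : E →L[ℂ] E) (lam : Fin r → ℝ) (T : E →L[ℂ] E) : E →L[ℂ] E :=
  ∑ a, (eigU Λ (lam a)).starProjection * T * (eigU Λ (lam a)).starProjection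

theorem blockDiag_mul_comm (hΛ : IsSelfAdjoint Λ) (T : E →L[ℂ] E) :
    blockDiag Λ lam T * Λ = Λ * blockDiag Λ lam T := by
  simp only [blockDiag, Finset.sum_mul, Finset.mul_sum]
  refine Finset.sum_congr rfl fun a _ => ?_
  rw [mul_assoc _ _ Λ, starProjection_eigU_mul hΛ, ← mul_assoc Λ, ← mul_assoc Λ,
    mul_starProjection_eigU, mul_smul_comm, smul_mul_assoc, smul_mul_assoc]

theorem tendsto_exp_conj (hΛ : IsSelfAdjoint Λ) (hlam : StrictAnti lam)
    (hUtop : (⨆ s, eigU Λ (lam s)) = ⊤) {T : E →L[ℂ] E}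
    (hT : ∀ a b, a < b →
      (eigU Λ (lam a)).starProjection * T * (eigU Λ (lam b)).starProjection = 0) :
    Tendsto (fun t : ℝ => exp ((t : ℂ) • Λ) * T * exp (((-t : ℝ) : ℂ) • Λ)) atTop
      (𝓝 (blockDiag Λ lam T)) := by
  have hexpand (t : ℝ) : exp ((t : ℂ) • Λ) * T * exp (((-t : ℝ) : ℂ) • Λ)
      = ∑ a, ∑ b, Real.exp (t * (lam a - lam b)) •
          ((eigU Λ (lam a)).starProjection * T * (eigU Λ (lam b)).starProjection) := by
    rw [exp_smul_eq_sum hΛ hlam.injective hUtop, exp_smul_eq_sum hΛ hlam.injective hUtop,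
      Finset.sum_mul, Finset.sum_mul]
    refine Finset.sum_congr rfl fun a _ => ?_
    rw [Finset.mul_sum]
    refine Finset.sum_congr rfl fun b _ => ?_
    rw [smul_mul_assoc, smul_mul_assoc, mul_smul_comm, smul_smul, ← Real.exp_add]
    congr 2
    ring
  have hdiag : blockDiag Λ lam T = ∑ a, ∑ b, if a = b then
      (eigU Λ (lam a)).starProjection * T * (eigU Λ (lam b)).starProjection else 0 := by
    simp [blockDiag]
  rw [hdiag]
  refine Tendsto.congr (fun t => (hexpand t).symm)
    (tendsto_finsetSum _ fun a _ => tendsto_finsetSum _ fun b _ => ?_)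
  rcases lt_trichotomy a b with hab | rfl | hba
  · simp [hT a b hab]
  · simp
  · have hdecay : Tendsto (fun t : ℝ => Real.exp (t * (lam a - lam b))) atTop (𝓝 0) :=
      Real.tendsto_exp_atBot.comp (tendsto_id.atTop_mul_const_of_neg (sub_neg.mpr (hlam hba)))
    simpa [hba.ne'] using hdecay.smul_const
      ((eigU Λ (lam a)).starProjection * T * (eigU Λ (lam b)).starProjection)

end Spectral

section Flag

variable {Λ : E →L[ℂ] E} {r : ℕ} {lam : Fin r → ℝ}

def flagSup (Λ : E →L[ℂ] E) (lam : Fin r → ℝ) (j : Fin (r + 1)) : Submodule ℂ E :=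
  ⨆ (k : Fin r) (_ : j ≤ k.castSucc), eigU Λ (lam k)

theorem flagSup_last : flagSup Λ lam (Fin.last r) = ⊥ :=
  eq_bot_iff.mpr <| iSup₂_le fun k hk => absurd hk (Fin.castSucc_lt_last k).not_ge

theorem flagSup_castSucc (s : Fin r) :
    flagSup Λ lam s.castSucc = eigU Λ (lam s) ⊔ flagSup Λ lam s.succ := by
  apply le_antisymm
  · refine iSup₂_le fun k hk => ?_
    rcases (Fin.castSucc_le_castSucc_iff.mp hk).eq_or_lt with rfl | hsk
    · exact le_sup_left
    · exact le_sup_of_le_right (le_iSup₂_of_le k (Fin.succ_le_castSucc_iff.mpr hsk) le_rfl)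
  · refine sup_le (le_iSup₂_of_le s le_rfl le_rfl) (iSup₂_le fun k hk => ?_)
    exact le_iSup₂_of_le k ((Fin.castSucc_le_succ s).trans hk) le_rfl

theorem eigU_le_flagSup (b : Fin r) : eigU Λ (lam b) ≤ flagSup Λ lam b.castSucc :=
  le_iSup₂_of_le b le_rfl le_rfl

theorem flagSup_le_orthogonal (hΛ : IsSelfAdjoint Λ) (hinj : Function.Injective lam)
    {a b : Fin r} (hab : a < b) : flagSup Λ lam b.castSucc ≤ (eigU Λ (lam a))ᗮ :=
  iSup₂_le fun _ hk => eigU_le_orthogonal hΛ fun h =>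
    (hab.trans_le (Fin.castSucc_le_castSucc_iff.mp hk)).ne (hinj h)

theorem starProjection_mul_mul_starProjection_eq_zero (hΛ : IsSelfAdjoint Λ)
    (hinj : Function.Injective lam) {T : E →L[ℂ] E}
    (hT : ∀ j, Set.MapsTo T (flagSup Λ lam j) (flagSup Λ lam j)) {a b : Fin r} (hab : a < b) :
    (eigU Λ (lam a)).starProjection * T * (eigU Λ (lam b)).starProjection = 0 := by
  ext x
  have hTx : T ((eigU Λ (lam b)).starProjection x) ∈ flagSup Λ lam b.castSucc :=
    hT _ (eigU_le_flagSup b (Submodule.starProjection_apply_mem _ x))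
  exact (Submodule.starProjection_apply_eq_zero_iff _).mpr (flagSup_le_orthogonal hΛ hinj hab hTx)

/-- The limit is the block-diagonal part of `u`; it is invertible because `u⁻¹` also preserves
the flag. -/
theorem exists_inGΛ_tendsto_expUnit_conj (hΛ : IsSelfAdjoint Λ) (hlam : StrictAnti lam)
    (hUtop : (⨆ s, eigU Λ (lam s)) = ⊤) {u : (E →L[ℂ] E)ˣ}
    (hu : ∀ j, Set.MapsTo (u : E →L[ℂ] E) (flagSup Λ lam j) (flagSup Λ lam j))
    (hu' : ∀ j, Set.MapsTo ((u⁻¹ : (E →L[ℂ] E)ˣ) : E →L[ℂ] E) (flagSup Λ lam j)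
      (flagSup Λ lam j)) :
    ∃ h : (E →L[ℂ] E)ˣ, InGΛ Λ h ∧
      Tendsto (fun t : ℝ => expUnit ((t : ℂ) • Λ) * u * (expUnit ((t : ℂ) • Λ))⁻¹) atTop
        (𝓝 h) := by
  have hval (w : (E →L[ℂ] E)ˣ) (t : ℝ) :
      ((expUnit ((t : ℂ) • Λ) * w * (expUnit ((t : ℂ) • Λ))⁻¹ : (E →L[ℂ] E)ˣ) : E →L[ℂ] E)
        = exp ((t : ℂ) • Λ) * w * exp (((-t : ℝ) : ℂ) • Λ) := by
    simp [expUnit]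
  have hinv (t : ℝ) : (expUnit ((t : ℂ) • Λ) * u * (expUnit ((t : ℂ) • Λ))⁻¹)⁻¹
      = expUnit ((t : ℂ) • Λ) * u⁻¹ * (expUnit ((t : ℂ) • Λ))⁻¹ := by
    group
  have hlim := tendsto_exp_conj hΛ hlam hUtop
    fun _ _ => starProjection_mul_mul_starProjection_eq_zero hΛ hlam.injective hu
  have hlim' := tendsto_exp_conj hΛ hlam hUtop
    fun _ _ => starProjection_mul_mul_starProjection_eq_zero hΛ hlam.injective hu'
  obtain ⟨h, hh, htend⟩ := exists_unit_tendsto_of_tendsto_val_inv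
    (hlim.congr fun t => (hval u t).symm) (hlim'.congr fun t => by rw [hinv, hval])
  refine ⟨h, ?_, htend⟩
  rw [InGΛ, hh]
  exact blockDiag_mul_comm hΛ _

end Flag

namespace Choices

variable {A : ℕ → (E →L[ℂ] E)ˣ} {Λ : E →L[ℂ] E} {r : ℕ} {lam : Fin r → ℝ}
  {EP : ∀ p : ℕ, ExtPower Λ p}

theorem Vsub_eq (ch ch' : Choices A Λ r lam EP) : ch.Vsub = ch'.Vsub := by
  funext j
  induction j using Fin.lastCases with
  | last => rw [ch.hVlast, ch'.hVlast]
  | cast s => exact SetLike.coe_injective ((ch.hVsub s).trans (ch'.hVsub s).symm)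

theorem map_C_zero_Vsub (hA0 : A 0 = 1) (ch : Choices A Λ r lam EP) (j : Fin (r + 1)) :
    (ch.Vsub j).map ((ch.C 0 : E →L[ℂ] E) : E →ₗ[ℂ] E) = flagSup Λ lam j := by
  have hW (s : Fin r) : (ch.W s).map ((ch.C 0 : E →L[ℂ] E) : E →ₗ[ℂ] E) = eigU Λ (lam s) := by
    simpa [ch.hg.1, hA0] using ch.hC_map s 0
  induction j using Fin.reverseInduction with
  | last => rw [ch.hVlast, flagSup_last, Submodule.map_bot]
  | cast s ih => rw [← ch.hW_sup s, Submodule.map_sup, ih, flagSup_castSucc, hW]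

theorem mapsTo_flagSup (hA0 : A 0 = 1) (ch ch' : Choices A Λ r lam EP) (j : Fin (r + 1)) :
    Set.MapsTo ((ch'.C 0 * (ch.C 0)⁻¹ : (E →L[ℂ] E)ˣ) : E →L[ℂ] E) (flagSup Λ lam j)
      (flagSup Λ lam j) := by
  rintro _ hx
  obtain ⟨y, hy, rfl⟩ := (ch.map_C_zero_Vsub hA0 j).symm ▸ hx
  rw [← ch'.map_C_zero_Vsub hA0, ← ch.Vsub_eq ch']
  refine ⟨y, hy, ?_⟩
  simp only [ContinuousLinearMap.coe_coe, Units.val_mul, mul_apply_eq_comp]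
  rw [← mul_apply_eq_comp (((ch.C 0)⁻¹ : (E →L[ℂ] E)ˣ) : E →L[ℂ] E), Units.inv_mul,
    one_apply_eq_self]

end Choices

theorem vbar_orbit_unique_general (Λ : E →L[ℂ] E) (hΛ : IsSelfAdjoint Λ)
    (A : ℕ → (E →L[ℂ] E)ˣ) (hA0 : A 0 = 1)
    (r : ℕ) (lam : Fin r → ℝ) (hlam : StrictAnti lam)
    (hUtop : (⨆ s, eigU Λ (lam s)) = ⊤)
    (EP : ∀ p : ℕ, ExtPower Λ p) (ch ch' : Choices A Λ r lam EP)
    (R : Rep Λ V) (v : V) (hv : v ≠ 0)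
    (vbar vbar' : V) (hvbar : vbar ≠ 0) (hvbar' : vbar' ≠ 0)
    (hlim : Tendsto (fun t : ℝ => Projectivization.mk ℂ
        ((R.ρ (expUnit ((t : ℂ) • Λ) * ch.C 0) : V →L[ℂ] V) v) (unit_apply_ne_zero _ hv))
      atTop (𝓝 (Projectivization.mk ℂ vbar hvbar)))
    (hlim' : Tendsto (fun t : ℝ => Projectivization.mk ℂ
        ((R.ρ (expUnit ((t : ℂ) • Λ) * ch'.C 0) : V →L[ℂ] V) v) (unit_apply_ne_zero _ hv))
      atTop (𝓝 (Projectivization.mk ℂ vbar' hvbar'))) :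
    ∃ h : (E →L[ℂ] E)ˣ, InGΛ Λ h ∧
      Projectivization.mk ℂ vbar' hvbar' =
        Projectivization.mk ℂ ((R.ρ h : V →L[ℂ] V) vbar) (unit_apply_ne_zero _ hvbar) := by
  obtain ⟨h, hΛh, hconj⟩ := exists_inGΛ_tendsto_expUnit_conj hΛ hlam hUtop
    (ch.mapsTo_flagSup hA0 ch')
    (by simpa only [mul_inv_rev, inv_inv] using ch'.mapsTo_flagSup hA0 ch)
  refine ⟨h, hΛh, mk_eq_mk_apply_of_tendsto (fun _ => unit_apply_ne_zero _ hv)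
    (fun _ => unit_apply_ne_zero _ (unit_apply_ne_zero _ hv)) hvbar hvbar' _
    ((R.continuous_ρ.tendsto h).comp hconj) hlim (hlim'.congr fun t => ?_)⟩
  have hgauge : expUnit ((t : ℂ) • Λ) * (ch'.C 0 * (ch.C 0)⁻¹) * (expUnit ((t : ℂ) • Λ))⁻¹ *
      (expUnit ((t : ℂ) • Λ) * ch.C 0) = expUnit ((t : ℂ) • Λ) * ch'.C 0 := by
    group
  simp only [← mul_apply_eq_comp, ← Units.val_mul, ← map_mul, hgauge]

/-- Proposition 2.9. Assume condition (*). The `ρ(G_Λ)`-orbit of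
`[v̄] = lim_{t→∞} [ρ(C_0 λ(t)) v]` is uniquely determined by the sequence `(A_i)` and `[v]`:
it is independent of the choices of the gauge sequence `(g_i)`, the complements `W_s` and the
identifications `C_i` (two such tuples are bundled in `ch` and `ch'`). -/
theorem vbar_orbit_unique (Λ : E →L[ℂ] E) (hΛ : IsSelfAdjoint Λ)
    (A : ℕ → (E →L[ℂ] E)ˣ) (hA0 : A 0 = 1) (hstar : CondStar A Λ)
    (r : ℕ) (lam : Fin r → ℝ) (hlam : StrictAnti lam)
    (hUne : ∀ s, eigU Λ (lam s) ≠ ⊥) (hUtop : (⨆ s, eigU Λ (lam s)) = ⊤)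
    (EP : ∀ p : ℕ, ExtPower Λ p) (ch ch' : Choices A Λ r lam EP)
    (R : Rep Λ V) (v : V) (hv : v ≠ 0)
    (vbar vbar' : V) (hvbar : vbar ≠ 0) (hvbar' : vbar' ≠ 0)
    (hlim : Tendsto (fun t : ℝ => Projectivization.mk ℂ
        ((R.ρ (expUnit ((t : ℂ) • Λ) * ch.C 0) : V →L[ℂ] V) v) (unit_apply_ne_zero _ hv))
      atTop (𝓝 (Projectivization.mk ℂ vbar hvbar)))
    (hlim' : Tendsto (fun t : ℝ => Projectivization.mk ℂ
        ((R.ρ (expUnit ((t : ℂ) • Λ) * ch'.C 0) : V →L[ℂ] V) v) (unit_apply_ne_zero _ hv))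
      atTop (𝓝 (Projectivization.mk ℂ vbar' hvbar'))) :
    ∃ h : (E →L[ℂ] E)ˣ, InGΛ Λ h ∧
      Projectivization.mk ℂ vbar' hvbar' =
        Projectivization.mk ℂ ((R.ρ h : V →L[ℂ] V) vbar) (unit_apply_ne_zero _ hvbar) :=
  vbar_orbit_unique_general Λ hΛ A hA0 r lam hlam hUtop EP ch ch' R v hv vbar vbar' hvbar hvbar'
    hlim hlim'

end CSW
end
end

section
/- Assume condition (*). Let ρ_k denote the representation of G = GL(E) on Sym^k(E*) induced by the dual of the standard representation, with its induced Hermitian inner product and with the induced self-adjoint operator Λ_k (so that ρ_k(e^{tΛ}) = e^{tΛ_k}), and let d be the associated weight function d(f) = lim_{i→∞} i^{-1} log‖ρ_k(A_i)f‖. Then for any nonzero f_1 ∈ Sym^k(E*) and f_2 ∈ Sym^l(E*), the product in the symmetric algebra satisfies d(f_1 · f_2) = d(f_1) + d(f_2). -/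
open Filter Topology NormedSpace
open scoped LinearAlgebra.Projectivization

set_option linter.unusedSectionVars false

noncomputable section

namespace CSW

variable {E : Type*} [NormedAddCommGroup E] [InnerProductSpace ℂ E] [FiniteDimensional ℂ E]
variable {V : Type*} [NormedAddCommGroup V] [InnerProductSpace ℂ V] [FiniteDimensional ℂ V]

variable {Λ : E →L[ℂ] E}

/-! Multiplication `Sym^k(E*) × Sym^l(E*) → Sym^(k+l)(E*)` has no zero divisors, so by compactness
of the unit spheres `‖f₁ f₂‖` is comparable to `‖f₁‖ ‖f₂‖` up to positive constants. Since the
action of `GL(E)` is multiplicative, `log ‖ρ(A_i)(f₁ f₂)‖` differs from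
`log ‖ρ(A_i) f₁‖ + log ‖ρ(A_i) f₂‖` by a bounded amount, which disappears after dividing by `i`. -/

section Bilinear

variable {𝕜 P Q R : Type*} [RCLike 𝕜] [NormedAddCommGroup P] [NormedSpace 𝕜 P]
  [NormedAddCommGroup Q] [NormedSpace 𝕜 Q] [NormedAddCommGroup R] [NormedSpace 𝕜 R]
  [ProperSpace P] [ProperSpace Q]

theorem _root_.ContinuousLinearMap.exists_pos_mul_norm_mul_le_norm (B : P →L[𝕜] Q →L[𝕜] R)
    (hB : ∀ x y, x ≠ 0 → y ≠ 0 → B x y ≠ 0) :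
    ∃ m > 0, ∀ x y, m * (‖x‖ * ‖y‖) ≤ ‖B x y‖ := by
  have hcont : Continuous fun p : P × Q => ‖B p.1 p.2‖ := B.continuous₂.norm
  obtain ⟨m, hm, hmin⟩ := ((isCompact_sphere (0 : P) 1).prod (isCompact_sphere (0 : Q) 1)
    ).exists_forall_le' hcont.continuousOn (a := 0) fun p hp =>
      norm_pos_iff.mpr (hB _ _ (ne_zero_of_mem_unit_sphere ⟨p.1, hp.1⟩)
        (ne_zero_of_mem_unit_sphere ⟨p.2, hp.2⟩))
  refine ⟨m, hm, fun x y => ?_⟩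
  rcases eq_or_ne x 0 with rfl | hx
  · simp
  rcases eq_or_ne y 0 with rfl | hy
  · simp
  have hx' : (‖x‖ : 𝕜)⁻¹ • x ∈ Metric.sphere (0 : P) 1 := by simp [norm_smul, hx]
  have hy' : (‖y‖ : 𝕜)⁻¹ • y ∈ Metric.sphere (0 : Q) 1 := by simp [norm_smul, hy]
  have hscale : ‖B ((‖x‖ : 𝕜)⁻¹ • x) ((‖y‖ : 𝕜)⁻¹ • y)‖ = ‖B x y‖ / (‖x‖ * ‖y‖) := by
    simp only [map_smul, FunLike.coe_smul, Pi.smul_apply, norm_smul, norm_inv,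
      RCLike.norm_ofReal, abs_norm]
    field_simp
  have hmin_xy := hmin _ (Set.mk_mem_prod hx' hy')
  rwa [hscale, le_div_iff₀ (by positivity)] at hmin_xy

theorem _root_.ContinuousLinearMap.exists_abs_log_norm_sub_le (B : P →L[𝕜] Q →L[𝕜] R)
    (hB : ∀ x y, x ≠ 0 → y ≠ 0 → B x y ≠ 0) :
    ∃ C, ∀ x y, x ≠ 0 → y ≠ 0 → |Real.log ‖B x y‖ - (Real.log ‖x‖ + Real.log ‖y‖)| ≤ C := by
  obtain ⟨m, hm, hlow⟩ := B.exists_pos_mul_norm_mul_le_norm hB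
  refine ⟨max (-Real.log m) (Real.log ‖B‖), fun x y hx hy => ?_⟩
  have hxy : 0 < ‖x‖ * ‖y‖ := by positivity
  rw [← Real.log_mul (norm_ne_zero_iff.mpr hx) (norm_ne_zero_iff.mpr hy),
    ← Real.log_div (norm_ne_zero_iff.mpr (hB x y hx hy)) hxy.ne']
  have hlo : m ≤ ‖B x y‖ / (‖x‖ * ‖y‖) := (le_div_iff₀ hxy).mpr (hlow x y)
  have hhi : ‖B x y‖ / (‖x‖ * ‖y‖) ≤ ‖B‖ :=
    (div_le_iff₀ hxy).mpr ((B.le_opNorm₂ x y).trans_eq (mul_assoc _ _ _))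
  have hlog_lo := Real.log_le_log hm hlo
  have hlog_hi := Real.log_le_log (hm.trans_le hlo) hhi
  exact abs_le.mpr ⟨by linarith [le_max_left (-Real.log m) (Real.log ‖B‖)],
    hlog_hi.trans (le_max_right _ _)⟩

end Bilinear

theorem tendsto_div_natCast_of_abs_sub_le {a c : ℕ → ℝ} {d C : ℝ}
    (ha : Tendsto (fun i : ℕ => a i / i) atTop (𝓝 d)) (hc : ∀ i, |c i - a i| ≤ C) :
    Tendsto (fun i : ℕ => c i / i) atTop (𝓝 d) := by
  have herr : Tendsto (fun i : ℕ => (c i - a i) / i) atTop (𝓝 0) :=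
    tendsto_of_tendsto_of_tendsto_of_le_of_le
      (tendsto_const_div_atTop_nhds_zero_nat (-C)) (tendsto_const_div_atTop_nhds_zero_nat C)
      (fun i => div_le_div_of_nonneg_right (neg_le_of_abs_le (hc i)) i.cast_nonneg)
      (fun i => div_le_div_of_nonneg_right (le_of_abs_le (hc i)) i.cast_nonneg)
  simpa [sub_div] using ha.add herr

theorem dweight_add_of_mul_general (Λ : E →L[ℂ] E)
    (A : ℕ → (E →L[ℂ] E)ˣ)
    (S : SymModel Λ) {k l : ℕ} (f₁ : S.P k) (f₂ : S.P l) (h1 : f₁ ≠ 0) (h2 : f₂ ≠ 0)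
    (d₁ d₂ : ℝ)
    (hd₁ : Tendsto (fun i : ℕ => Real.log
        ‖(((S.R k).ρ (A i) : (S.P k →L[ℂ] S.P k)ˣ) : S.P k →L[ℂ] S.P k) f₁‖ / i)
      atTop (𝓝 d₁))
    (hd₂ : Tendsto (fun i : ℕ => Real.log
        ‖(((S.R l).ρ (A i) : (S.P l →L[ℂ] S.P l)ˣ) : S.P l →L[ℂ] S.P l) f₂‖ / i)
      atTop (𝓝 d₂)) :
    Tendsto (fun i : ℕ => Real.log
        ‖(((S.R (k + l)).ρ (A i) : (S.P (k + l) →L[ℂ] S.P (k + l))ˣ) :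
          S.P (k + l) →L[ℂ] S.P (k + l)) (S.mul f₁ f₂)‖ / i)
      atTop (𝓝 (d₁ + d₂)) := by
  obtain ⟨C, hC⟩ := (S.mul (k := k) (l := l)).toContinuousBilinearMap.exists_abs_log_norm_sub_le
    fun _ _ => S.mul_ne_zero
  have hsum := hd₁.add hd₂
  simp only [← add_div] at hsum
  refine tendsto_div_natCast_of_abs_sub_le (C := C) hsum fun i => ?_
  rw [S.mul_equivariant]
  exact hC _ _ (unit_apply_ne_zero _ h1) (unit_apply_ne_zero _ h2)

/-- Assume condition (*). In the symmetric algebra `Sym(E*)` (with each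
`Sym^k(E*)` carrying the representation of `GL(E)` induced by the dual of the standard
representation and compatible self-adjoint operator `Λ_k`), the weight function
`d(f) = lim_i i⁻¹ log ‖ρ_k(A_i) f‖` is additive on products:
`d(f₁ · f₂) = d(f₁) + d(f₂)` for nonzero `f₁ ∈ Sym^k(E*)`, `f₂ ∈ Sym^l(E*)`. -/
theorem dweight_add_of_mul (Λ : E →L[ℂ] E) (hΛ : IsSelfAdjoint Λ)
    (A : ℕ → (E →L[ℂ] E)ˣ) (hA0 : A 0 = 1) (hstar : CondStar A Λ)
    (S : SymModel Λ) {k l : ℕ} (f₁ : S.P k) (f₂ : S.P l) (h1 : f₁ ≠ 0) (h2 : f₂ ≠ 0)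
    (d₁ d₂ : ℝ)
    (hd₁ : Tendsto (fun i : ℕ => Real.log
        ‖(((S.R k).ρ (A i) : (S.P k →L[ℂ] S.P k)ˣ) : S.P k →L[ℂ] S.P k) f₁‖ / i)
      atTop (𝓝 d₁))
    (hd₂ : Tendsto (fun i : ℕ => Real.log
        ‖(((S.R l).ρ (A i) : (S.P l →L[ℂ] S.P l)ˣ) : S.P l →L[ℂ] S.P l) f₂‖ / i)
      atTop (𝓝 d₂)) :
    Tendsto (fun i : ℕ => Real.log
        ‖(((S.R (k + l)).ρ (A i) : (S.P (k + l) →L[ℂ] S.P (k + l))ˣ) :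
          S.P (k + l) →L[ℂ] S.P (k + l)) (S.mul f₁ f₂)‖ / i)
      atTop (𝓝 (d₁ + d₂)) :=
  dweight_add_of_mul_general Λ A S f₁ f₂ h1 h2 d₁ d₂ hd₁ hd₂

end CSW
end
end

section
/- Let A: [0,∞) → G be a continuous path with A(0) = Id satisfying condition (**). Then for every v ∈ V \ {0}, the limit d(v) = lim_{t→∞} t^{-1} log‖ρ(A(t))v‖ exists; moreover the integer-time sequence (A(i))_{i∈ℕ} satisfies condition (*), and d(v) agrees with the weight lim_{i→∞} i^{-1} log‖ρ(A(i))v‖ computed from that sequence. -/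
open Filter Topology NormedSpace
open scoped LinearAlgebra.Projectivization

set_option linter.unusedSectionVars false

noncomputable section

namespace CSW

variable {E : Type*} [NormedAddCommGroup E] [InnerProductSpace ℂ E] [FiniteDimensional ℂ E]
variable {V : Type*} [NormedAddCommGroup V] [InnerProductSpace ℂ V] [FiniteDimensional ℂ V]

variable {Λ : E →L[ℂ] E}

/-- Condition (**) for a continuous path `A : [0,∞) → G`: for any sequence `t_i → ∞`, after
passing to a subsequence, the paths `t ∈ [0,2] ↦ A(t_i + t) A(t_i)⁻¹` converge uniformly to
`t ↦ g e^{tΛ} g⁻¹` for some unitary `g`. -/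
def CondStarStar (Ap : ℝ → (E →L[ℂ] E)ˣ) (Λ : E →L[ℂ] E) : Prop :=
  ∀ u : ℕ → ℝ, Tendsto u atTop atTop → ∃ ψ : ℕ → ℕ, StrictMono ψ ∧
    ∃ g : (E →L[ℂ] E)ˣ, (g : E →L[ℂ] E) ∈ unitary (E →L[ℂ] E) ∧
      TendstoUniformlyOn
        (fun j t => ((Ap (u (ψ j) + t) * (Ap (u (ψ j)))⁻¹ : (E →L[ℂ] E)ˣ) : E →L[ℂ] E))
        (fun t => ((g * expUnit ((t : ℂ) • Λ) * g⁻¹ : (E →L[ℂ] E)ˣ) : E →L[ℂ] E))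
        atTop (Set.Icc (0 : ℝ) 2)


/-!
Write `w_i = ρ(A_i) v`. The increment `log ‖w_{i+1}‖ - log ‖w_i‖` is the log-growth of `w_i`
under `ρ(B_{i+1})`, and along subsequences `ρ(B_{i+1})` and `ρ(B_{i+2})` tend to the same
self-adjoint `Q = ρ(g e^Λ g⁻¹)`. For self-adjoint `Q`, Cauchy–Schwarz applied to
`⟪y, Q² y⟫ = ‖Q y‖²` shows that the log-growth of `Q y` is at least that of `y`, with equality
only when `y` is an eigenvector of `Q²`, whose eigenvalues are those of `ρ(e^Λ)²`. So consecutive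
increments have subsequential limits `c ≤ c'`, with `c = c'` only at finitely many levels. A
bounded real sequence with this property converges: otherwise it would cross some other level
downwards infinitely often, and those crossings would produce `c = c'` at that level. Cesàro
averaging then gives `i⁻¹ log ‖w_i‖ → d`. Condition (**) yields (*) by evaluating the uniform
limit at `t = 1, 2`, and it bounds `log ‖ρ(A(t)) v‖ - log ‖ρ(A(⌊t⌋)) v‖`, which carries the
limit over to real times.
-/

section LogGrowth

variable {𝕜 W : Type*} [RCLike 𝕜] [NormedAddCommGroup W] [NormedSpace 𝕜 W]

def logGrowth (T : W →L[𝕜] W) (y : W) : ℝ := Real.log (‖T y‖ / ‖y‖)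

theorem logGrowth_smul (T : W →L[𝕜] W) {c : 𝕜} (hc : c ≠ 0) (y : W) :
    logGrowth T (c • y) = logGrowth T y := by
  rw [logGrowth, logGrowth, map_smul, norm_smul, norm_smul,
    mul_div_mul_left _ _ (norm_ne_zero_iff.2 hc)]

theorem tendsto_logGrowth {ι : Type*} {l : Filter ι} {T : ι → W →L[𝕜] W} {y : ι → W}
    {T₀ : W →L[𝕜] W} {y₀ : W} (hT : Tendsto T l (𝓝 T₀)) (hy : Tendsto y l (𝓝 y₀))
    (hy₀ : y₀ ≠ 0) (hTy₀ : T₀ y₀ ≠ 0) :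
    Tendsto (fun i => logGrowth (T i) (y i)) l (𝓝 (logGrowth T₀ y₀)) := by
  have happly : Tendsto (fun i => T i (y i)) l (𝓝 (T₀ y₀)) :=
    (isBoundedBilinearMap_apply.continuous.tendsto (T₀, y₀)).comp (hT.prodMk_nhds hy)
  exact (happly.norm.div hy.norm (norm_ne_zero_iff.2 hy₀)).log
    (div_ne_zero (norm_ne_zero_iff.2 hTy₀) (norm_ne_zero_iff.2 hy₀))

theorem exists_subseq_smul_tendsto [ProperSpace W] {x : ℕ → W} (hx : ∀ n, x n ≠ 0) :
    ∃ θ : ℕ → ℕ, StrictMono θ ∧ ∃ c : ℕ → 𝕜, (∀ n, c n ≠ 0) ∧ ∃ y ≠ 0,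
      Tendsto (fun n => c n • x (θ n)) atTop (𝓝 y) := by
  have hsphere (n : ℕ) : ((‖x n‖ : 𝕜))⁻¹ • x n ∈ Metric.sphere (0 : W) 1 := by
    simpa using norm_smul_inv_norm (𝕜 := 𝕜) (hx n)
  obtain ⟨y, hy, θ, hθ, hlim⟩ := (isCompact_sphere (0 : W) 1).tendsto_subseq hsphere
  refine ⟨θ, hθ, fun n => ((‖x (θ n)‖ : 𝕜))⁻¹, fun n => by simpa using hx (θ n), y,
    ne_zero_of_mem_unit_sphere ⟨y, hy⟩, hlim⟩

theorem exists_subseq_tendsto_logGrowth [ProperSpace W] {P P' : ℕ → W →L[𝕜] W}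
    {Q : W →L[𝕜] W} (hP : Tendsto P atTop (𝓝 Q)) (hP' : Tendsto P' atTop (𝓝 Q))
    (hQ : Function.Injective Q) {x : ℕ → W} (hx : ∀ n, x n ≠ 0) :
    ∃ θ : ℕ → ℕ, StrictMono θ ∧ ∃ y ≠ 0,
      Tendsto (fun j => logGrowth (P (θ j)) (x (θ j))) atTop (𝓝 (logGrowth Q y)) ∧
      Tendsto (fun j => logGrowth (P' (θ j)) (P (θ j) (x (θ j)))) atTop
        (𝓝 (logGrowth Q (Q y))) := by
  obtain ⟨θ, hθ, c, hc, y, hy, hlim⟩ := exists_subseq_smul_tendsto (𝕜 := 𝕜) hx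
  have hQy : Q y ≠ 0 := (map_ne_zero_iff Q hQ).2 hy
  have hPθ := hP.comp hθ.tendsto_atTop
  have hPx : Tendsto (fun j => P (θ j) (c j • x (θ j))) atTop (𝓝 (Q y)) :=
    (isBoundedBilinearMap_apply.continuous.tendsto (Q, y)).comp (hPθ.prodMk_nhds hlim)
  refine ⟨θ, hθ, y, hy, ?_, ?_⟩
  · refine (tendsto_logGrowth hPθ hlim hy hQy).congr fun j => ?_
    exact logGrowth_smul _ (hc j) _
  · refine (tendsto_logGrowth (hP'.comp hθ.tendsto_atTop) hPx hQy
      ((map_ne_zero_iff Q hQ).2 hQy)).congr fun j => ?_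
    simp only [Function.comp_apply, map_smul]
    exact logGrowth_smul _ (hc j) _

end LogGrowth

section SelfAdjoint

variable {𝕜 W : Type*} [RCLike 𝕜] [NormedAddCommGroup W] [InnerProductSpace 𝕜 W]
  [CompleteSpace W] {Q : W →L[𝕜] W}

theorem _root_.IsSelfAdjoint.inner_apply_apply_s17 (hQ : IsSelfAdjoint Q) (y : W) :
    inner 𝕜 y (Q (Q y)) = ((‖Q y‖ : 𝕜)) ^ 2 := by
  have h := ContinuousLinearMap.adjoint_inner_right Q y (Q y)
  rw [ContinuousLinearMap.isSelfAdjoint_iff'.1 hQ] at h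
  rw [h, inner_self_eq_norm_sq_to_K]

theorem _root_.IsSelfAdjoint.norm_apply_sq_le_s17 (hQ : IsSelfAdjoint Q) (y : W) :
    ‖Q y‖ ^ 2 ≤ ‖y‖ * ‖Q (Q y)‖ := by
  have h := re_inner_le_norm (𝕜 := 𝕜) y (Q (Q y))
  rwa [hQ.inner_apply_apply_s17, ← RCLike.ofReal_pow, RCLike.ofReal_re] at h

theorem logGrowth_le_logGrowth_apply (hQ : IsSelfAdjoint Q) {y : W} (hQy : Q y ≠ 0) :
    logGrowth Q y ≤ logGrowth Q (Q y) := by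
  have hy : y ≠ 0 := by rintro rfl; exact hQy (map_zero Q)
  have hy' := norm_pos_iff.2 hy
  have hQy' := norm_pos_iff.2 hQy
  apply Real.log_le_log (by positivity)
  rw [div_le_div_iff₀ hy' hQy', ← sq, mul_comm]
  exact hQ.norm_apply_sq_le_s17 y

theorem hasEigenvalue_mul_self_of_logGrowth_eq (hQ : IsSelfAdjoint Q) {y : W}
    (hQy : Q y ≠ 0) (heq : logGrowth Q (Q y) = logGrowth Q y) :
    Module.End.HasEigenvalue ((Q * Q : W →L[𝕜] W) : Module.End 𝕜 W)
      ((Real.exp (2 * logGrowth Q y) : ℝ) : 𝕜) := by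
  have hy : y ≠ 0 := by rintro rfl; exact hQy (map_zero Q)
  have hy' := norm_pos_iff.2 hy
  have hQy' := norm_pos_iff.2 hQy
  have hQQy' : 0 < ‖Q (Q y)‖ :=
    (mul_pos_iff_of_pos_left hy').1 ((pow_pos hQy' 2).trans_le (hQ.norm_apply_sq_le_s17 y))
  have hratio : ‖Q (Q y)‖ / ‖Q y‖ = ‖Q y‖ / ‖y‖ :=
    Real.log_injOn_pos (div_pos hQQy' hQy') (div_pos hQy' hy') heq
  have hnorm : ‖y‖ * ‖Q (Q y)‖ = ‖Q y‖ ^ 2 := by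
    field_simp at hratio
    linarith
  have hexp : Real.exp (2 * logGrowth Q y) = ‖Q (Q y)‖ / ‖y‖ := by
    rw [logGrowth, two_mul, Real.exp_add, Real.exp_log (div_pos hQy' hy')]
    field_simp
    linarith
  have hcs : inner 𝕜 y (Q (Q y)) = (‖y‖ : 𝕜) * ‖Q (Q y)‖ := by
    rw [hQ.inner_apply_apply_s17, ← RCLike.ofReal_pow, ← RCLike.ofReal_mul, hnorm]
  have hsmul := inner_eq_norm_mul_iff.1 hcs
  refine Module.End.hasEigenvalue_of_hasEigenvector ⟨Module.End.mem_eigenspace_iff.2 ?_, hy⟩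
  rw [hexp, ContinuousLinearMap.coe_coe, mul_apply_eq_comp, RCLike.ofReal_div,
    div_eq_inv_mul, mul_smul, hsmul, smul_smul,
    inv_mul_cancel₀ (RCLike.ofReal_ne_zero.2 hy'.ne'), one_smul]

end SelfAdjoint

section Units

variable {F α : Type*} [Monoid F] [FunLike F α α] [IsMulApplyEqComp F α] [IsOneApplyEqSelf F α]

theorem units_inv_apply_apply (u : Fˣ) (x : α) : (↑u⁻¹ : F) ((u : F) x) = x := by
  rw [← mul_apply_eq_comp, u.inv_mul, one_apply_eq_self]

theorem units_apply_inv_apply (u : Fˣ) (x : α) : (u : F) ((↑u⁻¹ : F) x) = x :=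
  units_inv_apply_apply u⁻¹ x

end Units

section Eigenvalues

variable {𝕜 W : Type*} [RCLike 𝕜] [NormedAddCommGroup W] [NormedSpace 𝕜 W]

theorem hasEigenvalue_of_hasEigenvalue_units_conj (u : (W →L[𝕜] W)ˣ) (M : W →L[𝕜] W) {μ : 𝕜}
    (h : Module.End.HasEigenvalue ((u * M * ↑u⁻¹ : W →L[𝕜] W) : Module.End 𝕜 W) μ) :
    Module.End.HasEigenvalue (M : Module.End 𝕜 W) μ := by
  obtain ⟨z, hz, hz0⟩ := h.exists_hasEigenvector
  have hz' : (u : W →L[𝕜] W) (M ((↑u⁻¹ : W →L[𝕜] W) z)) = μ • z :=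
    Module.End.mem_eigenspace_iff.1 hz
  refine Module.End.hasEigenvalue_of_hasEigenvector (x := (↑u⁻¹ : W →L[𝕜] W) z)
    ⟨Module.End.mem_eigenspace_iff.2 ?_, fun h0 => hz0 ?_⟩
  · simpa only [ContinuousLinearMap.coe_coe, units_inv_apply_apply, map_smul]
      using congrArg (↑u⁻¹ : W →L[𝕜] W) hz'
  · simpa only [units_apply_inv_apply, map_zero] using congrArg (u : W →L[𝕜] W) h0

theorem finite_setOf_hasEigenvalue_exp [FiniteDimensional 𝕜 W] (f : Module.End 𝕜 W) :
    {c : ℝ | f.HasEigenvalue ((Real.exp (2 * c) : ℝ) : 𝕜)}.Finite :=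
  (Module.End.finite_hasEigenvalue f).preimage
    (RCLike.ofReal_injective.comp (Real.exp_injective.comp
      (mul_right_injective₀ two_ne_zero))).injOn

end Eigenvalues

section RealSequences

theorem exists_bound_of_forall_subseq_tendsto {β : Type*} {S : Set β} {F : ℕ → β → ℝ}
    (h : ∀ φ : ℕ → ℕ, StrictMono φ → ∀ s : ℕ → β, (∀ n, s n ∈ S) →
      ∃ θ : ℕ → ℕ, StrictMono θ ∧ ∃ c, Tendsto (fun j => F (φ (θ j)) (s (θ j))) atTop (𝓝 c)) :
    ∃ C, ∀ᶠ n in atTop, ∀ x ∈ S, |F n x| ≤ C := by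
  by_contra! hcon
  obtain ⟨φ, hφ, hφS⟩ := extraction_forall_of_frequently fun n : ℕ => hcon n
  choose s hs hlarge using hφS
  obtain ⟨θ, hθ, c, hc⟩ := h φ hφ s hs
  exact not_tendsto_atTop_of_tendsto_nhds hc.abs
    (tendsto_atTop_mono (fun j => (hlarge (θ j)).le)
      (tendsto_natCast_atTop_atTop.comp hθ.tendsto_atTop))

theorem frequently_le_and_succ_lt {α : Type*} [LinearOrder α] {a : ℕ → α} {μ : α}
    (hle : ∃ᶠ n in atTop, μ ≤ a n) (hlt : ∃ᶠ n in atTop, a n < μ) :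
    ∃ᶠ n in atTop, μ ≤ a n ∧ a (n + 1) < μ := by
  by_contra! hstay
  obtain ⟨N, hN⟩ := eventually_atTop.1 hstay
  obtain ⟨n₀, hn₀N, hn₀⟩ := frequently_atTop.1 hle N
  have habove : ∀ n ≥ n₀, μ ≤ a n := fun n hn =>
    Nat.le_induction hn₀ (fun m hm ih => hN m (hn₀N.trans hm) ih) n hn
  obtain ⟨n, hn, hn'⟩ := frequently_atTop.1 hlt n₀
  exact (habove n hn).not_gt hn'

theorem tendsto_of_forall_subseq_tendsto_succ {a : ℕ → ℝ} {T : Set ℝ} (hT : T.Finite)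
    (h : ∀ φ : ℕ → ℕ, StrictMono φ → ∃ θ : ℕ → ℕ, StrictMono θ ∧ ∃ c c' : ℝ, c ≤ c' ∧
      (c = c' → c ∈ T) ∧ Tendsto (fun j => a (φ (θ j))) atTop (𝓝 c) ∧
      Tendsto (fun j => a (φ (θ j) + 1)) atTop (𝓝 c')) :
    ∃ d, Tendsto a atTop (𝓝 d) := by
  obtain ⟨C, hC⟩ := exists_bound_of_forall_subseq_tendsto (S := Set.univ)
    (F := fun n (_ : Unit) => a n) fun φ hφ _ _ => by
      obtain ⟨θ, hθ, c, -, -, -, hc, -⟩ := h φ hφ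
      exact ⟨θ, hθ, c, hc⟩
  have hbdd_le : IsBoundedUnder (· ≤ ·) atTop a :=
    ⟨C, eventually_map.2 (hC.mono fun n hn => (abs_le.1 (hn () trivial)).2)⟩
  have hbdd_ge : IsBoundedUnder (· ≥ ·) atTop a :=
    ⟨-C, eventually_map.2 (hC.mono fun n hn => (abs_le.1 (hn () trivial)).1)⟩
  rcases (liminf_le_limsup hbdd_le hbdd_ge).eq_or_lt with heq | hlt
  · exact ⟨_, tendsto_of_liminf_eq_limsup rfl heq.symm hbdd_le hbdd_ge⟩
  obtain ⟨μ, ⟨hlμ, hμL⟩, hμT⟩ := ((Set.Ioo_infinite hlt).sdiff hT).nonempty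
  obtain ⟨φ, hφ, hcross⟩ := extraction_of_frequently_atTop <| frequently_le_and_succ_lt
    ((frequently_lt_of_lt_limsup hbdd_ge.isCoboundedUnder_le hμL).mono fun _ => le_of_lt)
    (frequently_lt_of_liminf_lt hbdd_le.isCoboundedUnder_ge hlμ)
  obtain ⟨θ, -, c, c', hcc', hcT, hc, hc'⟩ := h φ hφ
  have hμc : μ ≤ c := ge_of_tendsto hc (Eventually.of_forall fun j => (hcross (θ j)).1)
  have hc'μ : c' ≤ μ := le_of_tendsto hc' (Eventually.of_forall fun j => (hcross (θ j)).2.le)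
  have hcμ : c = μ := le_antisymm (hcc'.trans hc'μ) hμc
  exact absurd (hcμ ▸ hcT (by linarith)) hμT

theorem tendsto_div_natCast_of_tendsto_sub {f : ℕ → ℝ} {d : ℝ}
    (h : Tendsto (fun n => f (n + 1) - f n) atTop (𝓝 d)) :
    Tendsto (fun n : ℕ => f n / n) atTop (𝓝 d) := by
  have hsum (n : ℕ) : f n = f 0 + ∑ i ∈ Finset.range n, (f (i + 1) - f i) := by
    rw [Finset.sum_range_sub]; ring
  have hlim := (tendsto_const_div_atTop_nhds_zero_nat (f 0)).add h.cesaro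
  rw [zero_add] at hlim
  refine hlim.congr fun n => ?_
  rw [hsum n, add_div]
  ring

theorem tendsto_div_of_tendsto_natCast_div {F : ℝ → ℝ} {d C : ℝ}
    (hF : Tendsto (fun n : ℕ => F n / n) atTop (𝓝 d))
    (hC : ∀ᶠ n : ℕ in atTop, ∀ s ∈ Set.Icc (0 : ℝ) 1, |F (n + s) - F n| ≤ C) :
    Tendsto (fun t => F t / t) atTop (𝓝 d) := by
  have hfloor : Tendsto (fun t : ℝ => F ⌊t⌋₊ / ⌊t⌋₊ * (⌊t⌋₊ / t)) atTop (𝓝 (d * 1)) :=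
    (hF.comp tendsto_nat_floor_atTop).mul tendsto_nat_floor_div_atTop
  have hgap : Tendsto (fun t : ℝ => (F t - F ⌊t⌋₊) / t) atTop (𝓝 0) := by
    obtain ⟨N, hN⟩ := eventually_atTop.1 hC
    refine squeeze_zero_norm' ?_ (tendsto_const_nhds (x := C).div_atTop tendsto_id)
    filter_upwards [eventually_ge_atTop (N : ℝ), eventually_gt_atTop 0] with t htN ht
    have hs := hN ⌊t⌋₊ (Nat.le_floor htN) (t - ⌊t⌋₊)
      ⟨sub_nonneg.2 (Nat.floor_le ht.le), by linarith [Nat.lt_floor_add_one t]⟩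
    rw [add_sub_cancel] at hs
    rw [Real.norm_eq_abs, abs_div, abs_of_pos ht]
    exact div_le_div_of_nonneg_right hs ht.le
  have hlim := hgap.add hfloor
  rw [zero_add, mul_one] at hlim
  refine hlim.congr' ?_
  filter_upwards [eventually_ge_atTop 1] with t ht
  have hfloor_ne : (⌊t⌋₊ : ℝ) ≠ 0 := Nat.cast_ne_zero.2 (Nat.floor_pos.2 ht).ne'
  field_simp
  ring

end RealSequences

section Representation

theorem expUnit_add {S T : E →L[ℂ] E} (h : Commute S T) :
    expUnit (S + T) = expUnit S * expUnit T :=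
  Units.ext <| exp_add_of_commute_of_mem_ball (𝕂 := ℂ) h
    ((expSeries_radius_eq_top ℂ (E →L[ℂ] E)).symm ▸ edist_lt_top _ _)
    ((expSeries_radius_eq_top ℂ (E →L[ℂ] E)).symm ▸ edist_lt_top _ _)

theorem continuous_expUnit_smul (T : E →L[ℂ] E) : Continuous fun t : ℝ => expUnit ((t : ℂ) • T) :=
  Units.isOpenEmbedding_val.continuous_iff.2 <|
    (continuous_iff_continuousAt.2 fun x => (exp_analytic (𝕂 := ℂ) x).continuousAt).comp
      (Complex.continuous_ofReal.smul continuous_const)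

theorem conj_expUnit_add_one_mul_inv (g : (E →L[ℂ] E)ˣ) (T : E →L[ℂ] E) (t : ℝ) :
    g * expUnit (((t + 1 : ℝ) : ℂ) • T) * g⁻¹ * (g * expUnit ((t : ℂ) • T) * g⁻¹)⁻¹
      = g * expUnit T * g⁻¹ := by
  have hsplit : ((t + 1 : ℝ) : ℂ) • T = T + (t : ℂ) • T := by
    push_cast
    rw [add_smul, one_smul, add_comm]
  rw [hsplit, expUnit_add ((Commute.refl T).smul_right _)]
  group

theorem Bseq_natCast_add_succ (Ap : ℝ → (E →L[ℂ] E)ˣ) (n k : ℕ) :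
    Bseq (fun i : ℕ => Ap i) (n + k + 1)
      = Ap (n + ((k : ℝ) + 1)) * (Ap n)⁻¹ * (Ap (n + k) * (Ap n)⁻¹)⁻¹ := by
  simp only [Bseq, Nat.add_sub_cancel, mul_inv_rev, inv_inv, mul_assoc, inv_mul_cancel_left]
  push_cast
  ring_nf

theorem Rep.ρ_mul_inv_apply (R : Rep Λ V) (a b : (E →L[ℂ] E)ˣ) (v : V) :
    (R.ρ (a * b⁻¹) : V →L[ℂ] V) ((R.ρ b : V →L[ℂ] V) v) = (R.ρ a : V →L[ℂ] V) v := by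
  rw [map_mul, map_inv, Units.val_mul, mul_apply_eq_comp, units_inv_apply_apply]

theorem Rep.logGrowth_ρ_mul_inv (R : Rep Λ V) (a b : (E →L[ℂ] E)ˣ) {v : V} (hv : v ≠ 0) :
    logGrowth (R.ρ (a * b⁻¹) : V →L[ℂ] V) ((R.ρ b : V →L[ℂ] V) v)
      = Real.log ‖(R.ρ a : V →L[ℂ] V) v‖ - Real.log ‖(R.ρ b : V →L[ℂ] V) v‖ := by
  rw [logGrowth, R.ρ_mul_inv_apply, Real.log_div (norm_ne_zero_iff.2 (unit_apply_ne_zero _ hv))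
    (norm_ne_zero_iff.2 (unit_apply_ne_zero _ hv))]

theorem Rep.isSelfAdjoint_ρ_conj_expUnit (R : Rep Λ V) {g : (E →L[ℂ] E)ˣ}
    (hg : (g : E →L[ℂ] E) ∈ unitary (E →L[ℂ] E)) :
    IsSelfAdjoint (R.ρ (g * expUnit Λ * g⁻¹) : V →L[ℂ] V) := by
  have he : IsSelfAdjoint (R.ρ (expUnit Λ) : V →L[ℂ] V) := by
    have h := R.exp_eq 1
    rw [Complex.ofReal_one, one_smul, one_smul] at h
    rw [h]
    exact R.selfAdjoint_ΛV.exp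
  have hstar : star (R.ρ g : V →L[ℂ] V) = ↑(R.ρ g)⁻¹ :=
    Units.eq_inv_of_mul_eq_one_right (Unitary.star_mul_self_of_mem (R.unitary_ρ g hg))
  rw [map_mul, map_mul, map_inv, Units.val_mul, Units.val_mul, ← hstar]
  exact he.conjugate _

end Representation

section Weights

variable {A : ℕ → (E →L[ℂ] E)ˣ} {v : V}

theorem CondStar.exists_subseq_tendsto_fseq_sub (hstar : CondStar A Λ) (R : Rep Λ V)
    (hv : v ≠ 0) {φ : ℕ → ℕ} (hφ : StrictMono φ) :
    ∃ θ : ℕ → ℕ, StrictMono θ ∧ ∃ c c' : ℝ, c ≤ c' ∧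
      (c = c' → Module.End.HasEigenvalue
        ((R.ρ (expUnit Λ * expUnit Λ) : V →L[ℂ] V) : Module.End ℂ V) (Real.exp (2 * c) : ℂ)) ∧
      Tendsto (fun j => fseq R A v (φ (θ j) + 1) - fseq R A v (φ (θ j))) atTop (𝓝 c) ∧
      Tendsto (fun j => fseq R A v (φ (θ j) + 1 + 1) - fseq R A v (φ (θ j) + 1)) atTop
        (𝓝 c') := by
  obtain ⟨ψ, hψ, g, hg, hB₁, hB₂⟩ := hstar φ hφ
  set u := g * expUnit Λ * g⁻¹
  set Q : V →L[ℂ] V := ↑(R.ρ u)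
  have hρ (k : ℕ) (hk : Tendsto (fun j => (Bseq A (φ (ψ j) + k) : E →L[ℂ] E)) atTop (𝓝 ↑u)) :
      Tendsto (fun j => (R.ρ (Bseq A (φ (ψ j) + k)) : V →L[ℂ] V)) atTop (𝓝 Q) :=
    (R.continuous_ρ.tendsto u).comp (Units.isOpenEmbedding_val.tendsto_nhds_iff.2 hk)
  obtain ⟨θ, hθ, y, hy, h₁, h₂⟩ := exists_subseq_tendsto_logGrowth (hρ 1 hB₁) (hρ 2 hB₂)
    (unit_apply_injective _) (x := fun j => (R.ρ (A (φ (ψ j))) : V →L[ℂ] V) v)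
    fun j => unit_apply_ne_zero _ hv
  have hQ : IsSelfAdjoint Q := R.isSelfAdjoint_ρ_conj_expUnit hg
  have hQy : Q y ≠ 0 := unit_apply_ne_zero _ hy
  refine ⟨ψ ∘ θ, hψ.comp hθ, _, _, logGrowth_le_logGrowth_apply hQ hQy, fun heq => ?_,
    h₁.congr fun j => R.logGrowth_ρ_mul_inv _ _ hv, h₂.congr fun j => ?_⟩
  · have hQQ : Q * Q = ↑(R.ρ g) * ↑(R.ρ (expUnit Λ * expUnit Λ)) * ↑(R.ρ g)⁻¹ := by
      simp only [Q, u, ← Units.val_mul, ← map_inv, ← map_mul]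
      group
    exact hasEigenvalue_of_hasEigenvalue_units_conj (R.ρ g) _
      (hQQ ▸ hasEigenvalue_mul_self_of_logGrowth_eq hQ hQy heq.symm)
  · exact (congrArg (logGrowth _) (R.ρ_mul_inv_apply _ _ v)).trans (R.logGrowth_ρ_mul_inv _ _ hv)

theorem CondStar.exists_tendsto_fseq_div (hstar : CondStar A Λ) (R : Rep Λ V) (hv : v ≠ 0) :
    ∃ d, Tendsto (fun i : ℕ => fseq R A v i / i) atTop (𝓝 d) := by
  obtain ⟨d, hd⟩ := tendsto_of_forall_subseq_tendsto_succ
    (a := fun i => fseq R A v (i + 1) - fseq R A v i) (finite_setOf_hasEigenvalue_exp _)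
    fun φ hφ => hstar.exists_subseq_tendsto_fseq_sub R hv hφ
  exact ⟨d, tendsto_div_natCast_of_tendsto_sub hd⟩

end Weights

section Paths

variable {Ap : ℝ → (E →L[ℂ] E)ˣ}

theorem CondStarStar.condStar (hss : CondStarStar Ap Λ) : CondStar (fun i : ℕ => Ap i) Λ := by
  intro φ hφ
  obtain ⟨ψ, hψ, g, hg, hunif⟩ := hss (fun n => (φ n : ℝ))
    (tendsto_natCast_atTop_atTop.comp hφ.tendsto_atTop)
  have hD (t : ℝ) (ht : t ∈ Set.Icc (0 : ℝ) 2) : Tendsto (fun j => Ap (φ (ψ j) + t) *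
      (Ap (φ (ψ j)))⁻¹) atTop (𝓝 (g * expUnit ((t : ℂ) • Λ) * g⁻¹)) :=
    Units.isOpenEmbedding_val.tendsto_nhds_iff.2 (hunif.tendsto_at ht)
  have hB (k : ℕ) (hk : (k : ℝ) + 1 ≤ 2) : Tendsto (fun j => (Bseq (fun i : ℕ => Ap i)
      (φ (ψ j) + k + 1) : E →L[ℂ] E)) atTop (𝓝 ↑(g * expUnit Λ * g⁻¹)) := by
    have hlim := (hD (k + 1) ⟨by positivity, hk⟩).mul (hD k ⟨by positivity, by linarith⟩).inv
    rw [conj_expUnit_add_one_mul_inv] at hlim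
    simpa only [Bseq_natCast_add_succ, Function.comp_def]
      using (Units.continuous_val.tendsto _).comp hlim
  exact ⟨ψ, hψ, g, hg, hB 0 (by norm_num), hB 1 (by norm_num)⟩

theorem CondStarStar.exists_bound_log_norm_sub (hss : CondStarStar Ap Λ) (R : Rep Λ V)
    {v : V} (hv : v ≠ 0) :
    ∃ C, ∀ᶠ n : ℕ in atTop, ∀ s ∈ Set.Icc (0 : ℝ) 1,
      |Real.log ‖(R.ρ (Ap (n + s)) : V →L[ℂ] V) v‖ - Real.log ‖(R.ρ (Ap n) : V →L[ℂ] V) v‖|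
        ≤ C := by
  refine exists_bound_of_forall_subseq_tendsto fun φ hφ s hs => ?_
  obtain ⟨s₀, -, θ₁, hθ₁, hs₀⟩ := isCompact_Icc.tendsto_subseq hs
  obtain ⟨ψ, hψ, g, -, hunif⟩ := hss (fun j => (φ (θ₁ j) : ℝ))
    (tendsto_natCast_atTop_atTop.comp (hφ.comp hθ₁).tendsto_atTop)
  have hs₀' : Tendsto (fun j => s (θ₁ (ψ j))) atTop (𝓝[Set.Icc 0 2] s₀) :=
    tendsto_nhdsWithin_iff.2 ⟨hs₀.comp hψ.tendsto_atTop,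
      Eventually.of_forall fun j => Set.Icc_subset_Icc_right one_le_two (hs _)⟩
  have hD : Tendsto (fun j => Ap (φ (θ₁ (ψ j)) + s (θ₁ (ψ j))) * (Ap (φ (θ₁ (ψ j))))⁻¹) atTop
      (𝓝 (g * expUnit ((s₀ : ℂ) • Λ) * g⁻¹)) :=
    Units.isOpenEmbedding_val.tendsto_nhds_iff.2 <| hunif.tendsto_comp
      (Units.continuous_val.comp ((continuous_const.mul (continuous_expUnit_smul Λ)).mul
        continuous_const)).continuousWithinAt hs₀'
  have hρD := (R.continuous_ρ.tendsto _).comp hD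
  obtain ⟨θ₂, hθ₂, y, -, hlim, -⟩ := exists_subseq_tendsto_logGrowth hρD hρD
    (unit_apply_injective _) (x := fun j => (R.ρ (Ap (φ (θ₁ (ψ j)))) : V →L[ℂ] V) v)
    fun j => unit_apply_ne_zero _ hv
  exact ⟨θ₁ ∘ ψ ∘ θ₂, hθ₁.comp (hψ.comp hθ₂), _, hlim.congr fun j => R.logGrowth_ρ_mul_inv _ _ hv⟩

end Paths

theorem path_weight_general (Λ : E →L[ℂ] E)
    (Ap : ℝ → (E →L[ℂ] E)ˣ) (hss : CondStarStar Ap Λ) (R : Rep Λ V) :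
    CondStar (fun i : ℕ => Ap i) Λ ∧
    ∀ v : V, v ≠ 0 → ∃ d : ℝ,
      Tendsto (fun t : ℝ => Real.log ‖(R.ρ (Ap t) : V →L[ℂ] V) v‖ / t) atTop (𝓝 d) ∧
      Tendsto (fun i : ℕ => Real.log ‖(R.ρ (Ap i) : V →L[ℂ] V) v‖ / i) atTop (𝓝 d) := by
  refine ⟨hss.condStar, fun v hv => ?_⟩
  obtain ⟨d, hd⟩ := hss.condStar.exists_tendsto_fseq_div R hv
  obtain ⟨C, hC⟩ := hss.exists_bound_log_norm_sub R hv
  exact ⟨d, tendsto_div_of_tendsto_natCast_div hd hC, hd⟩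

/-- Let `A : [0,∞) → G` be a continuous path with `A(0) = Id` satisfying
condition (**). Then for every `v ≠ 0` the limit `d(v) = lim_{t→∞} t⁻¹ log ‖ρ(A(t)) v‖`
exists; moreover the integer-time sequence `(A(i))` satisfies condition (*), and `d(v)`
agrees with the weight computed from that sequence. -/
theorem path_weight (Λ : E →L[ℂ] E) (hΛ : IsSelfAdjoint Λ)
    (Ap : ℝ → (E →L[ℂ] E)ˣ) (hcont : Continuous fun t : ℝ => (Ap t : E →L[ℂ] E))
    (hAp0 : Ap 0 = 1) (hss : CondStarStar Ap Λ) (R : Rep Λ V) :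
    CondStar (fun i : ℕ => Ap i) Λ ∧
    ∀ v : V, v ≠ 0 → ∃ d : ℝ,
      Tendsto (fun t : ℝ => Real.log ‖(R.ρ (Ap t) : V →L[ℂ] V) v‖ / t) atTop (𝓝 d) ∧
      Tendsto (fun i : ℕ => Real.log ‖(R.ρ (Ap i) : V →L[ℂ] V) v‖ / i) atTop (𝓝 d) :=
  path_weight_general Λ Ap hss R

end CSW
end
end
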